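/- arXiv:0803.0290 — 13 statements merged into one kernel-verified Lean document; each statement's English description precedes it below -/
import Mathlib

section
/- Let (u_k) be a strictly increasing sequence of nonzero integers. Then for every positive integer n, the product u_0·u_1···u_n divides lcm{u_0,...,u_n} · lcm{ ∏_{0≤i≤n, i≠j}(u_i − u_j) : j = 0,...,n }. -/
/-!
Compare `p`-adic multiplicities one prime `p` at a time. Choose `j` with `u j` of maximal
multiplicity; then every other `u i` has multiplicity at most that of `u i - u j`, so the `p`-part
of `∏ u i` divides that of `u j * ∏_{i ≠ j} (u i - u j)`, which divides the right-hand side.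
-/

open Finset

section

variable {R : Type*} [CommRing R]

theorem emultiplicity_le_emultiplicity_sub {p a b : R}
    (h : emultiplicity p a ≤ emultiplicity p b) :
    emultiplicity p a ≤ emultiplicity p (a - b) := by
  simpa [sub_eq_add_neg, emultiplicity_neg, min_eq_left h] using
    min_le_emultiplicity_add (p := p) (a := a) (b := -b)

theorem exists_emultiplicity_prod_le_emultiplicity_mul_prod_sub [IsDomain R] {ι : Type*}
    [DecidableEq ι] {p : R} (hp : Prime p) {s : Finset ι} (hs : s.Nonempty) (f : ι → R) :
    ∃ j ∈ s, emultiplicity p (∏ i ∈ s, f i) ≤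
      emultiplicity p (f j * ∏ i ∈ s.erase j, (f i - f j)) := by
  obtain ⟨j, hj, hmax⟩ := s.exists_max_image (fun i => emultiplicity p (f i)) hs
  refine ⟨j, hj, ?_⟩
  rw [← mul_prod_erase s f hj, emultiplicity_mul hp, emultiplicity_mul hp,
    Finset.emultiplicity_prod hp, Finset.emultiplicity_prod hp]
  gcongr with i hi
  exact emultiplicity_le_emultiplicity_sub (hmax i (mem_of_mem_erase hi))

theorem prod_dvd_lcm_mul_lcm_prod_sub [IsDomain R] [NormalizedGCDMonoid R]
    [UniqueFactorizationMonoid R] {ι : Type*} [DecidableEq ι] (s : Finset ι) (f : ι → R) :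
    ∏ i ∈ s, f i ∣ s.lcm f * s.lcm (fun j => ∏ i ∈ s.erase j, (f i - f j)) := by
  rcases s.eq_empty_or_nonempty with rfl | hs
  · simp
  by_cases hzero : ∏ i ∈ s, f i = 0
  · obtain ⟨i, hi, hfi⟩ := prod_eq_zero_iff.mp hzero
    simp [lcm_eq_zero_iff.mpr ⟨i, hi, hfi⟩]
  rw [UniqueFactorizationMonoid.dvd_iff_emultiplicity_le hzero]
  intro p hp
  obtain ⟨j, hj, hle⟩ := exists_emultiplicity_prod_le_emultiplicity_mul_prod_sub hp hs f
  exact hle.trans <| emultiplicity_le_emultiplicity_of_dvd_right <|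
    mul_dvd_mul (dvd_lcm hj) (dvd_lcm hj)

end

theorem stmt_1_general (u : ℕ → ℤ) (n : ℕ) :
    (∏ i ∈ Finset.range (n + 1), u i) ∣
      (Finset.range (n + 1)).lcm u *
        (Finset.range (n + 1)).lcm
          (fun j => ∏ i ∈ (Finset.range (n + 1)).erase j, (u i - u j)) :=
  prod_dvd_lcm_mul_lcm_prod_sub _ u

theorem stmt_1 (u : ℕ → ℤ) (hmono : StrictMono u) (hne : ∀ k, u k ≠ 0)
    (n : ℕ) (hn : 1 ≤ n) :
    (∏ i ∈ Finset.range (n + 1), u i) ∣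
      (Finset.range (n + 1)).lcm u *
        (Finset.range (n + 1)).lcm
          (fun j => ∏ i ∈ (Finset.range (n + 1)).erase j, (u i - u j)) :=
  stmt_1_general u n
end

section
/- For any strictly increasing arithmetic progression (u_k) of nonzero integers and any nonnegative integer n, the product u_0·u_1···u_n divides n!·(gcd(u_0,u_1))^n·lcm{u_0,...,u_n}; equivalently, lcm{u_0,...,u_n} is a multiple of the rational number (u_0·u_1···u_n)/(n!·(gcd(u_0,u_1))^n). -/
open Finset Nat

lemma aux_dist_prod_dvd (n j : ℕ) (hj : j ≤ n) :
    (∏ i ∈ (Finset.range (n+1)).erase j, Nat.dist i j) ∣ n ! := by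
  have hset : (Finset.range (n+1)).erase j = Finset.range j ∪ Finset.Ico (j+1) (n+1) := by
    ext x
    simp only [mem_erase, mem_range, mem_union, mem_Ico]
    omega
  have hdisj : Disjoint (Finset.range j) (Finset.Ico (j+1) (n+1)) := by
    rw [Finset.disjoint_left]
    intro x hx hx'
    simp only [mem_range, mem_Ico] at *
    omega
  rw [hset, Finset.prod_union hdisj]
  have h1 : ∏ i ∈ Finset.range j, Nat.dist i j = j ! := by
    rw [← Finset.prod_range_reflect (fun i => Nat.dist i j) j]
    have he : ∀ x ∈ Finset.range j, Nat.dist (j - 1 - x) j = x + 1 := by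
      intro x hx; simp only [mem_range] at hx; rw [Nat.dist]; omega
    rw [Finset.prod_congr rfl he, Finset.prod_range_add_one_eq_factorial]
  have h2 : ∏ i ∈ Finset.Ico (j+1) (n+1), Nat.dist i j = (n - j)! := by
    rw [Finset.prod_Ico_eq_prod_range]
    have he : ∀ x ∈ Finset.range (n + 1 - (j+1)), Nat.dist (j + 1 + x) j = x + 1 := by
      intro x hx; rw [Nat.dist]; omega
    rw [Finset.prod_congr rfl he, Finset.prod_range_add_one_eq_factorial]
    congr 1; omega
  rw [h1, h2]
  exact Nat.factorial_mul_factorial_dvd_factorial hj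

theorem stmt_2 (u₀ r : ℤ) (hr : 1 ≤ r) (u : ℕ → ℤ)
    (hu : ∀ k, u k = u₀ + k * r) (hne : ∀ k, u k ≠ 0) (n : ℕ) :
    (∏ i ∈ Finset.range (n + 1), u i) ∣
      (Nat.factorial n : ℤ) * (Int.gcd (u 0) (u 1) : ℤ) ^ n * (Finset.range (n + 1)).lcm u := by
  classical
  set d : ℕ := Int.gcd (u 0) (u 1) with hd
  set L : ℤ := (Finset.range (n + 1)).lcm u with hLdef
  have hdne : d ≠ 0 := by
    rw [hd, Ne, Int.gcd_eq_zero_iff]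
    rintro ⟨h0, -⟩
    exact hne 0 h0
  have hLne : L ≠ 0 := by
    rw [hLdef, Ne, Finset.lcm_eq_zero_iff]
    rintro ⟨i, -, hi⟩
    exact hne i hi
  have hLnatne : L.natAbs ≠ 0 := fun h => hLne (Int.natAbs_eq_zero.mp h)
  have hane : ∀ i, (u i).natAbs ≠ 0 := fun i h => hne i (Int.natAbs_eq_zero.mp h)
  -- reduce to ℕ
  rw [← Int.natAbs_dvd_natAbs]
  have hP : (∏ i ∈ Finset.range (n+1), u i).natAbs
      = ∏ i ∈ Finset.range (n+1), (u i).natAbs := map_prod Int.natAbsHom u _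
  rw [hP, Int.natAbs_mul, Int.natAbs_mul, Int.natAbs_pow, Int.natAbs_natCast,
    Int.natAbs_natCast]
  have hprodne : (∏ i ∈ Finset.range (n+1), (u i).natAbs) ≠ 0 :=
    Finset.prod_ne_zero_iff.mpr fun i _ => hane i
  have hrhsne : n ! * d ^ n * L.natAbs ≠ 0 :=
    mul_ne_zero (mul_ne_zero (Nat.factorial_ne_zero n) (pow_ne_zero n hdne)) hLnatne
  rw [← Nat.factorization_le_iff_dvd hprodne hrhsne, Finsupp.le_def]
  intro p
  by_cases hp : p.Prime
  swap
  · simp [Nat.factorization_eq_zero_of_not_prime _ hp]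
  rw [Nat.factorization_prod (fun i _ => hane i),
    Nat.factorization_mul (mul_ne_zero (Nat.factorial_ne_zero n) (pow_ne_zero n hdne)) hLnatne,
    Nat.factorization_mul (Nat.factorial_ne_zero n) (pow_ne_zero n hdne),
    Nat.factorization_pow]
  simp only [Finset.sum_apply', Finsupp.add_apply, Finsupp.smul_apply, smul_eq_mul]
  -- choose j maximizing the valuation
  obtain ⟨j, hjmem, hjmax⟩ := Finset.exists_max_image (Finset.range (n+1))
    (fun i => ((u i).natAbs).factorization p) ⟨0, by simp⟩
  have hjle : j ≤ n := by simpa [Nat.lt_succ_iff] using hjmem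
  -- key pointwise bound
  have key : ∀ i ∈ (Finset.range (n+1)).erase j,
      ((u i).natAbs).factorization p
        ≤ d.factorization p + (Nat.dist i j).factorization p := by
    intro i hi
    obtain ⟨hij, himem⟩ := Finset.mem_erase.mp hi
    set e := ((u i).natAbs).factorization p with he
    set t := ((r.natAbs)).factorization p with ht
    have hrne : r ≠ 0 := by omega
    have hrnatne : r.natAbs ≠ 0 := fun h => hrne (Int.natAbs_eq_zero.mp h)
    have hdvd_cast : ∀ (m : ℕ) (z : ℤ), p ^ m ∣ z.natAbs → (p : ℤ) ^ m ∣ z := by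
      intro m z hz
      have := Int.natCast_dvd_natCast.mpr hz
      push_cast at this
      exact this.trans ((abs_dvd _ _).mpr dvd_rfl)
    have h1 : (p : ℤ) ^ e ∣ u i := hdvd_cast e _ (Nat.ordProj_dvd _ p)
    have h2 : (p : ℤ) ^ e ∣ u j := by
      refine hdvd_cast e _ ?_
      exact dvd_trans (pow_dvd_pow p (hjmax i himem)) (Nat.ordProj_dvd _ p)
    have h3 : (p : ℤ) ^ e ∣ ((i : ℤ) - j) * r := by
      have heq : u i - u j = ((i : ℤ) - j) * r := by rw [hu, hu]; ring
      rw [← heq]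
      exact dvd_sub h1 h2
    have hrt : (p : ℤ) ^ t ∣ r := hdvd_cast t r (Nat.ordProj_dvd _ p)
    have hd_dvd : ∀ m : ℕ, (p : ℤ) ^ m ∣ r → (p : ℤ) ^ m ∣ u i → m ≤ d.factorization p := by
      intro m hm1 hm2
      have h0 : (p : ℤ) ^ m ∣ u 0 := by
        have heq : u 0 = u i - i * r := by rw [hu, hu]; push_cast; ring
        rw [heq]
        exact dvd_sub hm2 (hm1.mul_left _)
      have h1' : (p : ℤ) ^ m ∣ u 1 := by
        have heq : u 1 = u 0 + 1 * r := by rw [hu, hu]; push_cast; ring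
        rw [heq]
        exact dvd_add h0 (hm1.mul_left _)
      have hg : (p : ℤ) ^ m ∣ (d : ℤ) := by have := Int.dvd_gcd h0 h1'; exact_mod_cast this
      have hgn : p ^ m ∣ d := by exact_mod_cast hg
      exact (hp.pow_dvd_iff_le_factorization hdne).mp hgn
    by_cases hc : e ≤ t
    · have := hd_dvd e (dvd_trans (pow_dvd_pow _ hc) hrt) h1
      omega
    · push_neg at hc
      have htd : t ≤ d.factorization p :=
        hd_dvd t hrt (dvd_trans (pow_dvd_pow _ hc.le) h1)
      have hdistne : Nat.dist i j ≠ 0 := (Nat.dist_pos_of_ne hij).ne'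
      have hnat : p ^ e ∣ Nat.dist i j * r.natAbs := by
        have h4 := Int.natAbs_dvd_natAbs.mpr h3
        rwa [Int.natAbs_mul, Int.natAbs_pow, Int.natAbs_natCast,
          show ((i : ℤ) - j).natAbs = Nat.dist i j by rw [Nat.dist]; omega] at h4
      have h5 : e ≤ (Nat.dist i j * r.natAbs).factorization p :=
        (hp.pow_dvd_iff_le_factorization (mul_ne_zero hdistne hrnatne)).mp hnat
      rw [Nat.factorization_mul hdistne hrnatne, Finsupp.add_apply] at h5
      omega
  -- assemble
  have hsplit : ∑ i ∈ Finset.range (n+1), ((u i).natAbs).factorization p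
      = ((u j).natAbs).factorization p
        + ∑ i ∈ (Finset.range (n+1)).erase j, ((u i).natAbs).factorization p :=
    (Finset.add_sum_erase _ _ hjmem).symm
  have hjL : ((u j).natAbs).factorization p ≤ (L.natAbs).factorization p := by
    have hdl : (u j).natAbs ∣ L.natAbs :=
      Int.natAbs_dvd_natAbs.mpr (Finset.dvd_lcm hjmem)
    exact Finsupp.le_def.mp
      ((Nat.factorization_le_iff_dvd (hane j) hLnatne).mpr hdl) p
  have hcard : ((Finset.range (n+1)).erase j).card = n := by
    rw [Finset.card_erase_of_mem hjmem, Finset.card_range]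
    omega

  have hdistprodne : ∀ i ∈ (Finset.range (n+1)).erase j, Nat.dist i j ≠ 0 := by
    intro i hi
    exact (Nat.dist_pos_of_ne (Finset.mem_erase.mp hi).1).ne'
  have hsum2 : ∑ i ∈ (Finset.range (n+1)).erase j, (Nat.dist i j).factorization p
      ≤ (n !).factorization p := by
    have hprodd : (∏ i ∈ (Finset.range (n+1)).erase j, Nat.dist i j) ∣ n ! :=
      aux_dist_prod_dvd n j hjle
    have hpne : (∏ i ∈ (Finset.range (n+1)).erase j, Nat.dist i j) ≠ 0 :=
      Finset.prod_ne_zero_iff.mpr hdistprodne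
    have := Finsupp.le_def.mp
      ((Nat.factorization_le_iff_dvd hpne (Nat.factorial_ne_zero n)).mpr hprodd) p
    rwa [Nat.factorization_prod hdistprodne, Finset.sum_apply'] at this
  calc ∑ i ∈ Finset.range (n+1), ((u i).natAbs).factorization p
      = ((u j).natAbs).factorization p
        + ∑ i ∈ (Finset.range (n+1)).erase j, ((u i).natAbs).factorization p := hsplit
    _ ≤ (L.natAbs).factorization p
        + ∑ i ∈ (Finset.range (n+1)).erase j,
            (d.factorization p + (Nat.dist i j).factorization p) :=
        Nat.add_le_add hjL (Finset.sum_le_sum key)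
    _ = (L.natAbs).factorization p + (n * d.factorization p
        + ∑ i ∈ (Finset.range (n+1)).erase j, (Nat.dist i j).factorization p) := by
        rw [Finset.sum_add_distrib, Finset.sum_const, hcard, smul_eq_mul]
    _ ≤ (L.natAbs).factorization p + (n * d.factorization p + (n !).factorization p) := by
        omega
    _ = (n !).factorization p + n * d.factorization p + (L.natAbs).factorization p := by ring
end

section
/- Let n be a positive integer and x, y integers such that n divides x − y and n! divides x·y. Then n divides x and n divides y. -/
/-!
Fix a prime power `p ^ (k + 1)` dividing `n`. Since `p ^ k < p ^ (k + 1) ≤ n` are two distinct factors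
of `n!`, we get `p ^ (2k + 1) ∣ n! ∣ x y`, so one of `x`, `y` is divisible by `p ^ (k + 1)`; as
`p ^ (k + 1) ∣ x - y`, so is the other. Hence every prime power dividing `n` divides `x` and `y`.
-/

open scoped Nat

theorem Nat.mul_dvd_factorial {a b n : ℕ} (ha : 0 < a) (hab : a < b) (hbn : b ≤ n) :
    a * b ∣ n ! := by
  have hb : b ≠ 0 := by omega
  have hdvd_b_factorial : a * b ∣ b ! := by
    rw [← mul_factorial_pred hb, mul_comm a]
    exact mul_dvd_mul_left b (dvd_factorial ha (by omega))
  exact hdvd_b_factorial.trans (factorial_dvd_factorial hbn)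

theorem Nat.Prime.pow_two_mul_add_one_dvd_factorial {p k n : ℕ} (hp : p.Prime)
    (hn : p ^ (k + 1) ≤ n) : p ^ (2 * k + 1) ∣ n ! := by
  rw [show 2 * k + 1 = k + (k + 1) by ring, pow_add]
  exact mul_dvd_factorial (pow_pos hp.pos k) (pow_lt_pow_right₀ hp.one_lt k.lt_succ_self) hn

theorem Prime.pow_succ_dvd_or_pow_succ_dvd_of_pow_dvd_mul {M : Type*}
    [CommMonoidWithZero M] [IsCancelMulZero M] {p b : M} (hp : Prime p) {i j : ℕ} :
    ∀ {a : M}, p ^ (i + j + 1) ∣ a * b → p ^ (i + 1) ∣ a ∨ p ^ (j + 1) ∣ b := by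
  induction i with
  | zero =>
    intro a h
    rw [zero_add, mul_comm] at h
    exact (prime_pow_succ_dvd_mul hp h).symm.imp_left (by simpa using ·)
  | succ i ih =>
    intro a h
    rw [show i + 1 + j + 1 = i + j + 1 + 1 by ring] at h
    rcases prime_pow_succ_dvd_mul hp (mul_comm a b ▸ h) with hb | ⟨a', rfl⟩
    · exact .inr ((pow_dvd_pow p (by omega)).trans hb)
    · rw [pow_succ', mul_assoc] at h
      exact (ih (mul_dvd_mul_iff_left hp.ne_zero |>.mp h)).imp_left
        fun ha => by rw [pow_succ']; exact mul_dvd_mul_left p ha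

theorem Prime.pow_dvd_of_dvd_sub_of_dvd_mul {R : Type*} [CommRing R] [IsDomain R] {p x y : R}
    (hp : Prime p) {k : ℕ} (hsub : p ^ (k + 1) ∣ x - y) (hmul : p ^ (2 * k + 1) ∣ x * y) :
    p ^ (k + 1) ∣ x ∧ p ^ (k + 1) ∣ y := by
  rw [two_mul] at hmul
  rcases hp.pow_succ_dvd_or_pow_succ_dvd_of_pow_dvd_mul hmul with hx | hy
  · exact ⟨hx, (dvd_sub_right hx).mp hsub⟩
  · exact ⟨(dvd_sub_left hy).mp hsub, hy⟩

theorem stmt_4 (n : ℕ) (hn : 1 ≤ n) (x y : ℤ)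
    (h1 : (n : ℤ) ∣ x - y) (h2 : (Nat.factorial n : ℤ) ∣ x * y) :
    (n : ℤ) ∣ x ∧ (n : ℤ) ∣ y := by
  have prime_pow_dvd : ∀ p k : ℕ, p.Prime → p ^ k ∣ n →
      ((p ^ k : ℕ) : ℤ) ∣ x ∧ ((p ^ k : ℕ) : ℤ) ∣ y := by
    rintro p (_ | k) hp hpk
    · simp
    have hfac := hp.pow_two_mul_add_one_dvd_factorial (Nat.le_of_dvd hn hpk)
    push_cast
    refine (Nat.prime_iff_prime_int.mp hp).pow_dvd_of_dvd_sub_of_dvd_mul ?_ ?_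
    · exact_mod_cast (Int.natCast_dvd_natCast.mpr hpk).trans h1
    · exact_mod_cast (Int.natCast_dvd_natCast.mpr hfac).trans h2
  simp only [Int.natCast_dvd] at prime_pow_dvd ⊢
  rw [Nat.dvd_iff_prime_pow_dvd_dvd, Nat.dvd_iff_prime_pow_dvd_dvd]
  exact ⟨fun p k hp hpk => (prime_pow_dvd p k hp hpk).1,
    fun p k hp hpk => (prime_pow_dvd p k hp hpk).2⟩
end

section
/- Let (u_k) be an arithmetic progression with positive first term u_0 and positive common difference r, with gcd(u_0, r) = 1. Then for every nonnegative integer n, lcm{u_0, u_1, ..., u_n} ≥ u_0·(r+1)^{n−1}. -/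
/-!
If `u_k, …, u_{k+m}` all divide `L`, their product divides `m! rᵐ L` (the step `m → m + 1`
compares the two ways of splitting off an end term of the block), and since every `u_i` is prime
to `r` it even divides `m! L`. So the lcm is at least `u_k ⋯ u_{k+m} / m!` for every block in
`[0, n]`. An induction on `n` produces a block where this quotient is at least `u₀ (r+1)^(n-1)`:
appending `u_{k+m+1}` multiplies the quotient by `u_{k+m+1} / (m+1) ≥ r + 1` when `m + 1 ≤ u_k`,
and otherwise trading `u_k` for `u_{k+m+1}` multiplies it by `u_{k+m+1} / u_k ≥ r + 1`.
-/

open Finset Nat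

theorem prod_range_add_mul_shift {R : Type*} [CommSemiring R] (a r : R) (m : ℕ) :
    (∏ i ∈ range (m + 1), (a + r + i * r)) * a =
      (∏ i ∈ range (m + 1), (a + i * r)) * (a + (m + 1) * r) := by
  calc (∏ i ∈ range (m + 1), (a + r + i * r)) * a = ∏ i ∈ range (m + 2), (a + i * r) := by
        rw [prod_range_succ' (fun i : ℕ => a + (i : R) * r)]
        push_cast
        rw [zero_mul, add_zero]
        exact congrArg (· * a) (prod_congr rfl fun i _ => by ring)
    _ = _ := by rw [prod_range_succ]; push_cast; ring

theorem prod_range_add_mul_dvd_factorial_mul_pow_mul {R : Type*} [CommRing R] (r L : R) (m : ℕ)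
    (a : R) (h : ∀ i ≤ m, a + i * r ∣ L) :
    ∏ i ∈ range (m + 1), (a + i * r) ∣ (m ! : R) * r ^ m * L := by
  induction m generalizing a with
  | zero => simpa using h 0 le_rfl
  | succ m ih =>
    set D := (m ! : R) * r ^ m * L with hD
    have hlow : ∏ i ∈ range (m + 1), (a + i * r) ∣ D := ih a fun i hi => h i (by omega)
    have hhigh : ∏ i ∈ range (m + 1), (a + r + i * r) ∣ D := ih (a + r) fun i hi => by
      simpa [add_mul, add_assoc, add_comm, add_left_comm] using h (i + 1) (by omega)
    -- The difference is `(m + 1) r D = (m + 1)! r^(m+1) L`.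
    have hdiff : (∏ i ∈ range (m + 1), (a + i * r)) * (a + (m + 1) * r) ∣
        (a + (m + 1) * r) * D - a * D := by
      refine dvd_sub ?_ ?_
      · rw [mul_comm (a + _)]
        exact mul_dvd_mul hlow dvd_rfl
      · rw [← prod_range_add_mul_shift, mul_comm a]
        exact mul_dvd_mul hhigh dvd_rfl
    rw [prod_range_succ, Nat.cast_succ]
    convert hdiff using 1
    rw [hD, factorial_succ, pow_succ]
    push_cast
    ring

theorem prod_range_add_mul_dvd_factorial_mul {a r L m : ℕ} (hcop : a.Coprime r)
    (h : ∀ i ≤ m, a + i * r ∣ L) : ∏ i ∈ range (m + 1), (a + i * r) ∣ m ! * L := by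
  have hcop' : (∏ i ∈ range (m + 1), (a + i * r)).Coprime (r ^ m) :=
    Coprime.pow_right _ <| Coprime.prod_left fun i _ =>
      (coprime_add_mul_right_left a r i).mpr hcop
  have hdvd : ∏ i ∈ range (m + 1), (a + i * r) ∣ m ! * r ^ m * L := by
    have := prod_range_add_mul_dvd_factorial_mul_pow_mul (r : ℤ) (L : ℤ) m (a : ℤ)
      fun i hi => by exact_mod_cast h i hi
    exact_mod_cast this
  refine hcop'.dvd_of_dvd_mul_right ?_
  rwa [mul_right_comm]

theorem exists_factorial_mul_le_prod_range {u₀ r : ℕ} (hu₀ : 0 < u₀) (n : ℕ) :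
    ∃ k m, k + m = n + 1 ∧
      m ! * (u₀ * (r + 1) ^ n) ≤ ∏ i ∈ range (m + 1), (u₀ + k * r + i * r) := by
  induction n with
  | zero => exact ⟨1, 0, rfl, by simp⟩
  | succ n ih =>
    obtain ⟨k, m, hkm, hle⟩ := ih
    set b := u₀ + k * r
    rcases le_or_gt (m + 1) b with hb | hb
    · refine ⟨k, m + 1, by omega, ?_⟩
      rw [prod_range_succ]
      calc (m + 1)! * (u₀ * (r + 1) ^ (n + 1))
          = m ! * (u₀ * (r + 1) ^ n) * ((m + 1) * (r + 1)) := by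
            rw [factorial_succ, pow_succ]; ring
        _ ≤ (∏ i ∈ range (m + 1), (b + i * r)) * (b + (m + 1) * r) :=
            Nat.mul_le_mul hle (by nlinarith)
    · refine ⟨k + 1, m, by omega, Nat.le_of_mul_le_mul_right ?_ (by positivity : 0 < b)⟩
      have hb' : u₀ + (k + 1) * r = b + r := by ring
      have hshift := prod_range_add_mul_shift b r m
      simp only [Nat.cast_id] at hshift
      rw [hb', hshift]
      calc m ! * (u₀ * (r + 1) ^ (n + 1)) * b
          = m ! * (u₀ * (r + 1) ^ n) * ((r + 1) * b) := by rw [pow_succ]; ring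
        _ ≤ (∏ i ∈ range (m + 1), (b + i * r)) * (b + (m + 1) * r) :=
            Nat.mul_le_mul hle (by nlinarith)

theorem mul_pow_le_lcm_range {u₀ r : ℕ} (hu₀ : 0 < u₀) (hcop : u₀.Coprime r) (n : ℕ) :
    u₀ * (r + 1) ^ n ≤ (range (n + 2)).lcm fun j => u₀ + j * r := by
  obtain ⟨k, m, hkm, hle⟩ := exists_factorial_mul_le_prod_range (r := r) hu₀ n
  set L := (range (n + 2)).lcm fun j => u₀ + j * r
  have hL : L ≠ 0 := by
    rw [Ne, Finset.lcm_eq_zero_iff]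
    rintro ⟨j, -, hj⟩
    exact (Nat.add_pos_left hu₀ _).ne' hj
  have hdvd : ∏ i ∈ range (m + 1), (u₀ + k * r + i * r) ∣ m ! * L := by
    refine prod_range_add_mul_dvd_factorial_mul ((coprime_add_mul_right_left u₀ r k).mpr hcop)
      fun i hi => ?_
    have hterm : u₀ + k * r + i * r = u₀ + (k + i) * r := by ring
    rw [hterm]
    exact dvd_lcm (f := fun j => u₀ + j * r) (mem_range.mpr (by omega))
  exact Nat.le_of_mul_le_mul_left (hle.trans (Nat.le_of_dvd (by positivity) hdvd))
    (factorial_pos m)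

theorem stmt_5_general (u₀ r : ℕ) (hu₀ : 0 < u₀)
    (hcop : Nat.Coprime u₀ r) (u : ℕ → ℕ) (hu : ∀ k, u k = u₀ + k * r) (n : ℕ) :
    (((Finset.range (n + 1)).lcm u : ℕ) : ℝ) ≥ u₀ * (r + 1 : ℝ) ^ ((n : ℝ) - 1) := by
  obtain rfl : u = fun k => u₀ + k * r := funext hu
  cases n with
  | zero =>
    have hr1 : (1 : ℝ) ≤ r + 1 := by linarith [r.cast_nonneg (α := ℝ)]
    simpa [Real.rpow_neg_one] using
      mul_le_of_le_one_right (u₀.cast_nonneg (α := ℝ)) (inv_le_one_of_one_le₀ hr1)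
  | succ n =>
    have hexp : ((n + 1 : ℕ) : ℝ) - 1 = n := by push_cast; ring
    rw [ge_iff_le, hexp, Real.rpow_natCast]
    exact_mod_cast mul_pow_le_lcm_range hu₀ hcop n

theorem stmt_5 (u₀ r : ℕ) (hu₀ : 0 < u₀) (hr : 0 < r)
    (hcop : Nat.Coprime u₀ r) (u : ℕ → ℕ) (hu : ∀ k, u k = u₀ + k * r) (n : ℕ) :
    (((Finset.range (n + 1)).lcm u : ℕ) : ℝ) ≥ u₀ * (r + 1 : ℝ) ^ ((n : ℝ) - 1) :=
  stmt_5_general u₀ r hu₀ hcop u hu n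
end

section
/- Let (u_k) be an arithmetic progression with positive first term u_0 and positive common difference r, gcd(u_0, r) = 1. If n is a positive multiple of r + 1, then lcm{u_0, ..., u_n} ≥ u_0·(r+1)^n. -/
/-!
Write `n = (r + 1) m` and `M = m r`. The `M`-th forward difference of `x ↦ 1 / x` with step `r`
at `u_m` is `Σ_j (-1)^(M-j) C(M, j) / u_(m+j) = (-1)^M M! r^M / ∏_j u_(m+j)`; multiplying by
`L = lcm (u_0, …, u_n)` shows that `∏_(j ≤ M) u_(m+j)` divides `L · M! · r^M`, hence `L · M!`, as
every `u_k` is coprime to `r`. It remains to see `∏_(j ≤ M) u_(m+j) ≥ u_0 (r + 1)^n M!`, by induction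
on `m`: going from `m` to `m + 1` multiplies the left side by `u_(n+1) ⋯ u_(n+r+1) / u_m` and the
right side by `(r + 1)^(r+1) (M + 1) ⋯ (M + r)`, and the first factor is the larger one. For
`u_0 ≤ r + 1` this is a factor-by-factor comparison; for larger `u_0` it follows from
`∏ (b_s + d_s) ≥ ∏ b_s · (1 + Σ d_s / Y)` whenever all `b_s ≤ Y`.
-/

open Finset Nat fwdDiff

theorem fwdDiff_iter_inv {K : Type*} [Field K] (h x : K) (n : ℕ)
    (hx : ∀ j ∈ range (n + 1), x + j * h ≠ 0) :
    (Δ_[h])^[n] (·⁻¹) x = (-1) ^ n * n ! * h ^ n / ∏ j ∈ range (n + 1), (x + j * h) := by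
  induction n generalizing x with
  | zero => simp
  | succ n ih =>
    set P := ∏ j ∈ range n, (x + (j + 1 : ℕ) * h)
    have hP : P ≠ 0 := prod_ne_zero_iff.mpr fun j hj => hx (j + 1) (by simp at hj ⊢; omega)
    have hfirst : x ≠ 0 := by simpa using hx 0 (by simp)
    have hlast : x + (n + 1 : ℕ) * h ≠ 0 := hx (n + 1) (by simp)
    have hshift : ∏ j ∈ range (n + 1), (x + h + j * h) = P * (x + (n + 1 : ℕ) * h) := by
      rw [prod_range_succ]
      congr 1
      · exact prod_congr rfl fun j _ => by push_cast; ring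
      · push_cast; ring
    have hbase : ∏ j ∈ range (n + 1), (x + j * h) = P * x := by
      rw [prod_range_succ', Nat.cast_zero, zero_mul, add_zero]
    have hnext : ∏ j ∈ range (n + 1 + 1), (x + j * h) = P * (x + (n + 1 : ℕ) * h) * x := by
      rw [prod_range_succ', prod_range_succ, Nat.cast_zero, zero_mul, add_zero]
    rw [Function.iterate_succ_apply', fwdDiff, ih x (fun j hj => hx j (by simp at hj ⊢; omega)),
      ih (x + h) fun j hj => ?_, hshift, hbase, hnext]
    · rw [Nat.factorial_succ]
      push_cast at hlast ⊢
      field_simp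
      ring
    · simpa [add_mul, add_assoc, add_comm h] using hx (j + 1) (by simpa using hj)

theorem prod_add_mul_dvd_mul_factorial {a d L : ℕ} (hcop : Coprime a d) (n : ℕ)
    (hL : ∀ j ∈ range (n + 1), a + j * d ∣ L) :
    ∏ j ∈ range (n + 1), (a + j * d) ∣ L * n ! := by
  rcases eq_or_ne L 0 with rfl | hL0
  · simp
  set P := ∏ j ∈ range (n + 1), (a + j * d)
  have hne : ∀ j ∈ range (n + 1), (a + j * d : ℚ) ≠ 0 := fun j hj => by
    exact_mod_cast ne_zero_of_dvd_ne_zero hL0 (hL j hj)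
  have hP : (P : ℚ) ≠ 0 := by push_cast [P]; exact prod_ne_zero_iff.mpr hne
  set N : ℤ := ∑ k ∈ range (n + 1), (-1) ^ (n - k) * n.choose k * (L / (a + k * d) : ℕ)
  have hN : (P : ℚ) * N = (-1) ^ n * (L * n ! * d ^ n : ℕ) := by
    have hdiff := fwdDiff_iter_eq_sum_shift (d : ℚ) (·⁻¹) n (a : ℚ)
    rw [fwdDiff_iter_inv _ _ _ (by simpa using hne)] at hdiff
    have hq : (N : ℚ) = L * ∑ k ∈ range (n + 1),
        ((-1 : ℤ) ^ (n - k) * n.choose k) • ((a : ℚ) + k • (d : ℚ))⁻¹ := by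
      simp only [N, Int.cast_sum, Int.cast_mul, Int.cast_pow, Int.cast_neg, Int.cast_one,
        Int.cast_natCast, mul_sum, zsmul_eq_mul, nsmul_eq_mul]
      refine sum_congr rfl fun k hk => ?_
      rw [Nat.cast_div (hL k hk) (by exact_mod_cast hne k hk)]
      push_cast
      ring
    have hPq : (P : ℚ) = ∏ j ∈ range (n + 1), ((a : ℚ) + j * d) := by push_cast [P]; rfl
    rw [hq, ← hdiff, ← hPq, mul_left_comm, mul_div_cancel₀ _ hP]
    push_cast
    ring
  have hZ : (P : ℤ) ∣ (-1) ^ n * (L * n ! * d ^ n : ℕ) := ⟨N, by exact_mod_cast hN.symm⟩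
  have hdvd : P ∣ L * n ! * d ^ n :=
    Int.natCast_dvd_natCast.mp ((isUnit_neg_one.pow n).dvd_mul_left.mp hZ)
  refine (Coprime.pow_right n (Coprime.prod_left fun j _ => ?_)).dvd_of_dvd_mul_right hdvd
  exact (coprime_add_mul_right_left a d j).mpr hcop

theorem prod_mul_add_sum_le_mul_prod_add {ι R : Type*} [CommSemiring R] [PartialOrder R]
    [IsOrderedRing R] (s : Finset ι) (a d : ι → R) (Y : R) (ha : ∀ i ∈ s, 0 ≤ a i)
    (hd : ∀ i ∈ s, 0 ≤ d i) (haY : ∀ i ∈ s, a i ≤ Y) :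
    (∏ i ∈ s, a i) * (Y + ∑ i ∈ s, d i) ≤ Y * ∏ i ∈ s, (a i + d i) := by
  classical
  induction s using Finset.induction_on with
  | empty => simp
  | insert i s hi ih =>
    simp only [forall_mem_insert] at ha hd haY
    rw [prod_insert hi, prod_insert hi, sum_insert hi]
    have hP : 0 ≤ ∏ j ∈ s, a j := prod_nonneg ha.2
    have hPQ : ∏ j ∈ s, a j ≤ ∏ j ∈ s, (a j + d j) :=
      prod_le_prod ha.2 fun j hj => le_add_of_nonneg_right (hd.2 j hj)
    calc a i * (∏ j ∈ s, a j) * (Y + (d i + ∑ j ∈ s, d j))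
        = a i * ((∏ j ∈ s, a j) * (Y + ∑ j ∈ s, d j)) + a i * (∏ j ∈ s, a j) * d i := by ring
      _ ≤ a i * (Y * ∏ j ∈ s, (a j + d j)) + Y * (∏ j ∈ s, (a j + d j)) * d i := by
        gcongr ?_ + ?_
        · exact mul_le_mul_of_nonneg_left (ih ha.2 hd.2 haY.2) ha.1
        · exact mul_le_mul_of_nonneg_right (mul_le_mul haY.1 hPQ hP (ha.1.trans haY.1)) hd.1
      _ = Y * ((a i + d i) * ∏ j ∈ s, (a j + d j)) := by ring

theorem add_mul_pow_mul_prod_le_prod_of_le {u₀ r : ℕ} (M : ℕ) (hu₀ : 0 < u₀) (hu : u₀ ≤ r + 1) :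
    (u₀ + M) * (r + 1) ^ (r + 1) * ∏ s ∈ range r, (M + s + 1)
      ≤ ∏ s ∈ range (r + 1), (u₀ + M * (r + 1) + (s + 1) * r) := by
  obtain ⟨v, rfl⟩ : ∃ v, u₀ = v + 1 := ⟨u₀ - 1, by omega⟩
  obtain ⟨w, rfl⟩ : ∃ w, r = v + w := ⟨r - v, by omega⟩
  have hsplit : (v + 1 + M) * (v + w + 1) ^ (v + w + 1) * ∏ s ∈ range (v + w), (M + s + 1)
      = (∏ s ∈ range (v + 1), (v + w + 1) * (M + s + 1))
        * ∏ i ∈ range w, (v + w + 1) * (M + (v + 1 + i)) := by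
    simp only [prod_mul_distrib, prod_const, card_range, prod_range_succ, prod_range_add]
    ring_nf
  rw [hsplit, add_right_comm v w 1, prod_range_add _ (v + 1)]
  refine Nat.mul_le_mul (prod_le_prod' fun s hs => ?_) (prod_le_prod' fun i hi => ?_)
  all_goals simp only [mem_range] at *; nlinarith

theorem add_mul_pow_mul_prod_le_prod_of_ge {u₀ r : ℕ} (M : ℕ) (hu : r + 1 ≤ u₀) :
    (u₀ + M) * (r + 1) ^ (r + 1) * ∏ s ∈ range r, (M + s + 1)
      ≤ ∏ s ∈ range (r + 1), (u₀ + M * (r + 1) + (s + 1) * r) := by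
  obtain ⟨c, rfl⟩ : ∃ c, u₀ = r + 1 + c := ⟨u₀ - (r + 1), by omega⟩
  set B := ∏ s ∈ range r, (r + 1) * (M + s + 1)
  set Z := (r + 1) * (M + r + 1)
  have hB : B * (Z + r * (c + 1)) ≤ Z * ∏ s ∈ range r, ((r + 1) * (M + s + 1) + (c + 1)) := by
    simpa using prod_mul_add_sum_le_mul_prod_add (range r) (fun s => (r + 1) * (M + s + 1))
      (fun _ => c + 1) Z (by simp) (by simp) fun s hs => by
        simp only [mem_range, Z] at hs ⊢; nlinarith
  have hterm : ∏ s ∈ range r, ((r + 1) * (M + s + 1) + (c + 1))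
      ≤ ∏ s ∈ range r, (r + 1 + c + M * (r + 1) + (s + 1) * r) :=
    prod_le_prod' fun s hs => by simp only [mem_range] at hs; nlinarith
  have hZ : 0 < Z := by positivity
  refine le_of_mul_le_mul_left ?_ hZ
  rw [prod_range_succ]
  calc Z * ((r + 1 + c + M) * (r + 1) ^ (r + 1) * ∏ s ∈ range r, (M + s + 1))
      = B * ((Z + (r + 1) * c) * Z) := by
        simp only [B, Z, prod_mul_distrib, prod_const, card_range]; ring
    _ ≤ B * ((Z + r * (c + 1)) * (Z + c)) :=
        Nat.mul_le_mul_left _ (by nlinarith [Nat.zero_le (r * Z), Nat.zero_le (r * (c + 1) * c)])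
    _ ≤ Z * (∏ s ∈ range r, (r + 1 + c + M * (r + 1) + (s + 1) * r)) * (Z + c) := by
        rw [← mul_assoc]; exact Nat.mul_le_mul_right _ (hB.trans (Nat.mul_le_mul_left _ hterm))
    _ = _ := by simp only [Z]; ring

theorem add_mul_pow_mul_prod_le_prod {u₀ r : ℕ} (M : ℕ) (hu₀ : 0 < u₀) :
    (u₀ + M) * (r + 1) ^ (r + 1) * ∏ s ∈ range r, (M + s + 1)
      ≤ ∏ s ∈ range (r + 1), (u₀ + M * (r + 1) + (s + 1) * r) :=
  (le_total u₀ (r + 1)).elim (add_mul_pow_mul_prod_le_prod_of_le M hu₀)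
    (add_mul_pow_mul_prod_le_prod_of_ge M)

theorem mul_pow_mul_factorial_le_prod {u₀ : ℕ} (r : ℕ) (hu₀ : 0 < u₀) (m : ℕ) :
    u₀ * (r + 1) ^ (m * (r + 1)) * (m * r)! ≤ ∏ j ∈ range (m * r + 1), (u₀ + (m + j) * r) := by
  induction m with
  | zero => simp
  | succ m ih =>
    have hblock : (u₀ + m * r) * ∏ j ∈ range ((m + 1) * r + 1), (u₀ + (m + 1 + j) * r)
        = (∏ j ∈ range (m * r + 1), (u₀ + (m + j) * r))
          * ∏ s ∈ range (r + 1), (u₀ + m * r * (r + 1) + (s + 1) * r) := by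
      have h := prod_range_succ' (fun j => u₀ + (m + j) * r) ((m + 1) * r + 1)
      rw [show (m + 1) * r + 1 + 1 = (m * r + 1) + (r + 1) by ring, prod_range_add,
        add_zero] at h
      rw [mul_comm, prod_congr rfl fun j _ =>
        (by ring : u₀ + (m + 1 + j) * r = u₀ + (m + (j + 1)) * r), ← h]
      exact congrArg _ (prod_congr rfl fun s _ => by ring)
    have hfact : ((m + 1) * r)! = (m * r)! * ∏ s ∈ range r, (m * r + s + 1) := by
      rw [show (m + 1) * r = m * r + r by ring, ← factorial_mul_ascFactorial,
        ascFactorial_eq_prod_range]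
      exact congrArg _ (prod_congr rfl fun s _ => by ring)
    refine le_of_mul_le_mul_left ?_ (show 0 < u₀ + m * r by omega)
    calc (u₀ + m * r) * (u₀ * (r + 1) ^ ((m + 1) * (r + 1)) * ((m + 1) * r)!)
        = u₀ * (r + 1) ^ (m * (r + 1)) * (m * r)!
          * ((u₀ + m * r) * (r + 1) ^ (r + 1) * ∏ s ∈ range r, (m * r + s + 1)) := by
          rw [hfact]; ring
      _ ≤ _ := Nat.mul_le_mul ih (add_mul_pow_mul_prod_le_prod (m * r) hu₀)
      _ = _ := hblock.symm

theorem stmt_6_general (u₀ r : ℕ) (hu₀ : 0 < u₀)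
    (hcop : Nat.Coprime u₀ r) (u : ℕ → ℕ) (hu : ∀ k, u k = u₀ + k * r)
    (n : ℕ) (hdvd : (r + 1) ∣ n) :
    (Finset.range (n + 1)).lcm u ≥ u₀ * (r + 1) ^ n := by
  obtain ⟨m, rfl⟩ := hdvd
  set L := (range ((r + 1) * m + 1)).lcm u
  have hL : L ≠ 0 := by
    rw [Ne, Finset.lcm_eq_zero_iff]
    rintro ⟨k, -, hk⟩
    rw [hu] at hk
    omega
  have hdiv : ∀ j ∈ range (m * r + 1), u₀ + m * r + j * r ∣ L := fun j hj => by
    have hj' : m + j < (r + 1) * m + 1 := by simp only [mem_range] at hj; nlinarith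
    have := dvd_lcm (f := u) (mem_range.mpr hj')
    rwa [hu, add_mul, ← add_assoc] at this
  have hprod := Nat.le_of_dvd (by positivity)
    (prod_add_mul_dvd_mul_factorial ((coprime_add_mul_right_left u₀ r m).mpr hcop) _ hdiv)
  have hbound := mul_pow_mul_factorial_le_prod r hu₀ m
  simp only [add_mul, ← add_assoc] at hbound
  rw [mul_comm (r + 1) m]
  exact le_of_mul_le_mul_right (hbound.trans hprod) (factorial_pos _)

theorem stmt_6 (u₀ r : ℕ) (hu₀ : 0 < u₀) (hr : 0 < r)
    (hcop : Nat.Coprime u₀ r) (u : ℕ → ℕ) (hu : ∀ k, u k = u₀ + k * r)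
    (n : ℕ) (hn : 0 < n) (hdvd : (r + 1) ∣ n) :
    (Finset.range (n + 1)).lcm u ≥ u₀ * (r + 1) ^ n :=
  stmt_6_general u₀ r hu₀ hcop u hu n hdvd
end

section
/- Let (u_k) be an arithmetic progression with positive first term u_0 and positive common difference r, gcd(u_0, r) = 1. Then for every positive integer n, lcm{u_0, ..., u_n} ≥ r·(r+1)^{n−1}. -/
/-!
Writing `P = u_a ⋯ u_{a+k}` for a block of `k + 1` consecutive terms, the alternating identity
`∑ᵢ (-1)ⁱ C(k,i) P / u_{a+i} = k! rᵏ` shows that `P` divides `k! rᵏ L` for every common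
multiple `L` of the block; as `P` is coprime to `r`, even `P ∣ k! L`. Taking the last `k + 1`
terms gives `L ≥ r^(k+1) (k+1) C(n,k+1) = r · n C(n-1,k) rᵏ`, and choosing `k` to maximise
`C(n-1,k) rᵏ`, the largest of the `n` terms of the binomial expansion of `(r+1)^(n-1)`,
yields the bound.
-/

open Finset Nat

section CommRing

variable {R : Type*} [CommRing R]

/-- Summand `i` is `(-1)ⁱ C(k,i) ∏_{j ≤ k, j ≠ i} (x + j r)`, the product being split at
`j = i`. -/
theorem sum_alternating_choose_mul_prod_ne (x r : R) (k : ℕ) :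
    ∑ i ∈ range (k + 1), (k.choose i : R) * ((-1) ^ i * (∏ j ∈ range i, (x + j * r)) *
      ∏ j ∈ range (k - i), (x + ((i + 1 + j : ℕ) : R) * r)) = k ! * r ^ k := by
  induction k generalizing x with
  | zero => simp
  | succ k ih =>
    -- Pascal's rule turns the sum `S_{k+1}(x)` into `(x + (k+1) r) S_k(x) - x S_k(x + r)`.
    have h_last : ∀ i ∈ range (k + 1), (k.choose i : R) * ((-1) ^ i *
        (∏ j ∈ range i, (x + j * r)) * ∏ j ∈ range (k + 1 - i), (x + ((i + 1 + j : ℕ) : R) * r)) =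
        (x + (k + 1) * r) * (k.choose i * ((-1) ^ i * (∏ j ∈ range i, (x + j * r)) *
          ∏ j ∈ range (k - i), (x + ((i + 1 + j : ℕ) : R) * r))) := by
      intro i hi
      have hik : i + 1 + (k - i) = k + 1 := by have := mem_range.1 hi; omega
      rw [show k + 1 - i = k - i + 1 by have := mem_range.1 hi; omega, prod_range_succ, hik]
      push_cast
      ring
    have h_first : ∀ i ∈ range (k + 1), (k.choose i : R) * ((-1) ^ (i + 1) *
        (∏ j ∈ range (i + 1), (x + j * r)) *
          ∏ j ∈ range (k - i), (x + ((i + 1 + 1 + j : ℕ) : R) * r)) =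
        -x * (k.choose i * ((-1) ^ i * (∏ j ∈ range i, (x + r + j * r)) *
          ∏ j ∈ range (k - i), (x + r + ((i + 1 + j : ℕ) : R) * r))) := by
      intro i _
      have h_shift : ∀ m : ℕ, x + ((m + 1 : ℕ) : R) * r = x + r + m * r := fun m => by
        push_cast; ring
      simp only [prod_range_succ', h_shift, show ∀ j, i + 1 + 1 + j = i + 1 + j + 1 by omega]
      push_cast
      ring
    have h_pascal := sum_choose_succ_mul (fun i m => (-1) ^ i * (∏ j ∈ range i, (x + j * r)) *
      ∏ j ∈ range m, (x + ((i + 1 + j : ℕ) : R) * r)) k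
    rw [show k + 1 + 1 = k + 2 from rfl, h_pascal, sum_congr rfl h_last, sum_congr rfl h_first,
      ← mul_sum, ← mul_sum, ih, ih, factorial_succ]
    push_cast
    ring

theorem prod_dvd_factorial_mul_pow_mul {x r L : R} {k : ℕ}
    (h : ∀ j ∈ range (k + 1), x + j * r ∣ L) :
    ∏ j ∈ range (k + 1), (x + j * r) ∣ k ! * r ^ k * L := by
  rw [← sum_alternating_choose_mul_prod_ne x r k, sum_mul]
  refine dvd_sum fun i hi => ?_
  have h_split : (∏ j ∈ range i, (x + j * r)) * (x + i * r) *
      ∏ j ∈ range (k - i), (x + ((i + 1 + j : ℕ) : R) * r) = ∏ j ∈ range (k + 1), (x + j * r) := by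
    rw [← prod_range_succ, ← prod_range_add (fun j : ℕ => x + (j : R) * r),
      show i + 1 + (k - i) = k + 1 by have := mem_range.1 hi; omega]
  obtain ⟨c, hc⟩ := h i hi
  exact ⟨k.choose i * (-1) ^ i * c, by rw [hc, ← h_split]; ring⟩

end CommRing

theorem prod_dvd_factorial_mul_of_coprime {u₀ r L : ℕ} (hcop : Coprime u₀ r) {a k : ℕ}
    (h : ∀ j ∈ range (k + 1), u₀ + (a + j) * r ∣ L) :
    ∏ j ∈ range (k + 1), (u₀ + (a + j) * r) ∣ k ! * L := by
  have hcast : ∀ j : ℕ, ((u₀ + (a + j) * r : ℕ) : ℤ) = (u₀ + a * r : ℤ) + j * r := by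
    intro j; push_cast; ring
  have h_int : ∏ j ∈ range (k + 1), (u₀ + (a + j) * r) ∣ r ^ k * (k ! * L) := by
    have h_ring := prod_dvd_factorial_mul_pow_mul (x := (u₀ + a * r : ℤ)) (r := r) (L := L) (k := k)
      fun j hj => by rw [← hcast]; exact Int.natCast_dvd_natCast.2 (h j hj)
    rw [mul_left_comm, ← mul_assoc, ← Int.natCast_dvd_natCast, Nat.cast_prod,
      prod_congr rfl fun j _ => hcast j]
    push_cast
    exact h_ring
  refine (Coprime.pow_right k (Coprime.prod_left fun j _ => ?_)).dvd_of_dvd_mul_left h_int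
  exact (coprime_add_mul_right_left u₀ r _).2 hcop

theorem pow_mul_ascFactorial_le_factorial_mul_lcm {u₀ r : ℕ} (hu₀ : 0 < u₀) (hcop : Coprime u₀ r)
    {a k n : ℕ} (h : a + k ≤ n) :
    r ^ (k + 1) * a.ascFactorial (k + 1) ≤ k ! * (range (n + 1)).lcm (fun i => u₀ + i * r) := by
  have hL : (range (n + 1)).lcm (fun i => u₀ + i * r) ≠ 0 := by
    rw [Ne, Finset.lcm_eq_zero_iff]
    rintro ⟨i, -, hi⟩
    omega
  calc r ^ (k + 1) * a.ascFactorial (k + 1) = ∏ j ∈ range (k + 1), ((a + j) * r) := by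
        rw [ascFactorial_eq_prod_range, prod_mul_distrib, prod_const, card_range, mul_comm]
    _ ≤ ∏ j ∈ range (k + 1), (u₀ + (a + j) * r) := prod_le_prod' fun j _ => le_add_left _ _
    _ ≤ _ := le_of_dvd (by positivity) <| prod_dvd_factorial_mul_of_coprime hcop fun j hj =>
        dvd_lcm (f := fun i => u₀ + i * r) (mem_range.2 (by have := mem_range.1 hj; omega))

theorem exists_pow_le_mul_choose_mul_pow (r m : ℕ) :
    ∃ k ≤ m, (r + 1) ^ m ≤ (m + 1) * (m.choose k * r ^ k) := by
  obtain ⟨k, hk, hmax⟩ := exists_max_image (range (m + 1)) (fun j => m.choose j * r ^ j)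
    nonempty_range_add_one
  refine ⟨k, Nat.lt_succ_iff.1 (mem_range.1 hk), ?_⟩
  calc (r + 1) ^ m = ∑ j ∈ range (m + 1), m.choose j * r ^ j := by
        rw [add_pow]; simp [mul_comm]
    _ ≤ (range (m + 1)).card • (m.choose k * r ^ k) := sum_le_card_nsmul _ _ _ hmax
    _ = (m + 1) * (m.choose k * r ^ k) := by rw [card_range, smul_eq_mul]

theorem stmt_7_general (u₀ r : ℕ) (hu₀ : 0 < u₀)
    (hcop : Nat.Coprime u₀ r) (u : ℕ → ℕ) (hu : ∀ k, u k = u₀ + k * r)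
    (n : ℕ) (hn : 1 ≤ n) :
    (Finset.range (n + 1)).lcm u ≥ r * (r + 1) ^ (n - 1) := by
  obtain ⟨m, rfl⟩ : ∃ m, n = m + 1 := ⟨n - 1, by omega⟩
  obtain ⟨k, hkm, h_binom⟩ := exists_pow_le_mul_choose_mul_pow r m
  have h_lcm := pow_mul_ascFactorial_le_factorial_mul_lcm hu₀ hcop
    (a := m + 1 - k) (k := k) (n := m + 1) (by omega)
  have h_asc : (m + 1 - k).ascFactorial (k + 1) = k ! * ((m + 1) * m.choose k) := by
    rw [ascFactorial_eq_factorial_mul_choose', show m + 1 - k + (k + 1) - 1 = m + 1 by omega,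
      factorial_succ, add_one_mul_choose_eq]
    ring
  rw [show u = fun i => u₀ + i * r from funext hu, add_tsub_cancel_right, ge_iff_le]
  refine le_of_mul_le_mul_left ?_ (factorial_pos k)
  calc k ! * (r * (r + 1) ^ m) ≤ k ! * (r * ((m + 1) * (m.choose k * r ^ k))) := by gcongr
    _ = r ^ (k + 1) * (m + 1 - k).ascFactorial (k + 1) := by rw [h_asc]; ring
    _ ≤ _ := h_lcm

theorem stmt_7 (u₀ r : ℕ) (hu₀ : 0 < u₀) (hr : 0 < r)
    (hcop : Nat.Coprime u₀ r) (u : ℕ → ℕ) (hu : ∀ k, u k = u₀ + k * r)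
    (n : ℕ) (hn : 1 ≤ n) :
    (Finset.range (n + 1)).lcm u ≥ r * (r + 1) ^ (n - 1) :=
  stmt_7_general u₀ r hu₀ hcop u hu n hn
end

section
/- Let (u_k) be an arithmetic progression with positive first term u_0 and positive common difference r, gcd(u_0, r) = 1. Then for every positive integer n, lcm{u_0, ..., u_n} ≥ (n/(n+1))·r·((r+1)^{n−1} + (r−1)^{n−1}). -/
/-!
Writing `Δ` for the forward difference with step `r`, the `m`-th difference of `x ↦ x⁻¹` at `a`
is `(-1)ᵐ m! rᵐ / ∏_{i ≤ m} (a + i r)`. Multiplying by a common multiple `L` of the `a + i r`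
turns the left-hand side into an integer, so the product of `m + 1` consecutive terms of an
arithmetic progression divides `m! rᵐ L`; when the terms are coprime to `r`, it divides `m! L`.
For the last `j + 1` terms `u_{n-j}, …, u_n`, each at least its index times `r`, this gives
`n C(n-1, j) r^(j+1) ≤ L` for every `j < n`. Summing these bounds with the weights
`1 + (-1)^(n-1-j) ∈ {0, 2}`, whose total is at most `n + 1`, bounds
`n r ((r+1)^(n-1) + (r-1)^(n-1))` by `(n + 1) L`.
-/

open Finset Nat

theorem fwdDiff_iter_inv_apply {K : Type*} [Field K] (r a : K) (m : ℕ)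
    (ha : ∀ i ≤ m, a + i * r ≠ 0) :
    (fwdDiff r)^[m] (fun x : K ↦ x⁻¹) a =
      (-1) ^ m * m ! * r ^ m / ∏ i ∈ range (m + 1), (a + i * r) := by
  induction m generalizing a with
  | zero => simp
  | succ m ih =>
    have ha' : ∀ i ≤ m, a + r + i * r ≠ 0 := fun i hi ↦ by
      convert ha (i + 1) (by omega) using 1; push_cast; ring
    have h_last : ∏ i ∈ range (m + 2), (a + i * r) =
        (∏ i ∈ range (m + 1), (a + i * r)) * (a + (m + 1) * r) := by
      rw [prod_range_succ]; push_cast; ring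
    have h_first : ∏ i ∈ range (m + 2), (a + i * r) =
        (∏ i ∈ range (m + 1), (a + r + i * r)) * a := by
      rw [prod_range_succ']
      simp only [cast_add, cast_one, cast_zero, zero_mul, add_zero]
      exact congrArg (· * a) (prod_congr rfl fun i _ ↦ by ring)
    have hP : ∏ i ∈ range (m + 1), (a + i * r) ≠ 0 :=
      prod_ne_zero_iff.2 fun i hi ↦ ha i (by simp at hi; omega)
    have hP' : ∏ i ∈ range (m + 1), (a + r + i * r) ≠ 0 :=
      prod_ne_zero_iff.2 fun i hi ↦ ha' i (by simp at hi; omega)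
    have hlast0 : a + (m + 1) * r ≠ 0 := by simpa using ha (m + 1) le_rfl
    rw [Function.iterate_succ_apply', fwdDiff, ih (a + r) ha', ih a fun i hi ↦ ha i (by omega)]
    have hrel : (∏ i ∈ range (m + 1), (a + i * r)) * (a + (m + 1) * r) =
        (∏ i ∈ range (m + 1), (a + r + i * r)) * a := h_last.symm.trans h_first
    rw [h_last, div_sub_div _ _ hP' hP,
      div_eq_div_iff (mul_ne_zero hP' hP) (mul_ne_zero hP hlast0)]
    push_cast [factorial_succ]
    linear_combination ((-1) ^ m * m ! * r ^ m * ∏ i ∈ range (m + 1), (a + i * r)) * hrel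

theorem prod_range_add_mul_dvd (a r L m : ℕ) (h : ∀ i ≤ m, a + i * r ∣ L) :
    ∏ i ∈ range (m + 1), (a + i * r) ∣ m ! * r ^ m * L := by
  rcases eq_or_ne L 0 with rfl | hL
  · simp
  have hne : ∀ i ≤ m, (a : ℚ) + i * r ≠ 0 := fun i hi ↦ by
    exact_mod_cast ne_zero_of_dvd_ne_zero hL (h i hi)
  have hq : ∀ k ≤ m, ((L / (a + k * r) : ℕ) : ℚ) = L * ((a : ℚ) + k • (r : ℚ))⁻¹ := fun k hk ↦ by
    rw [Nat.cast_div (h k hk) (by exact_mod_cast hne k hk), nsmul_eq_mul, div_eq_mul_inv]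
    push_cast; rfl
  set z : ℤ := ∑ k ∈ range (m + 1), (-1) ^ (m - k) * m.choose k * (L / (a + k * r) : ℕ)
  have hz : (z : ℚ) = L * (fwdDiff (r : ℚ))^[m] (fun x : ℚ ↦ x⁻¹) a := by
    rw [fwdDiff_iter_eq_sum_shift, mul_sum]
    simp only [z, Int.cast_sum, Int.cast_mul, Int.cast_pow, Int.cast_neg, Int.cast_one,
      Int.cast_natCast]
    refine sum_congr rfl fun k hk ↦ ?_
    rw [hq k (by simp at hk; omega), zsmul_eq_mul]
    push_cast
    ring
  rw [fwdDiff_iter_inv_apply _ _ _ hne] at hz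
  have hzP : (z * ∏ i ∈ range (m + 1), (a + i * r) : ℤ) = (-1) ^ m * (m ! * r ^ m * L : ℕ) := by
    have hP : ∏ i ∈ range (m + 1), ((a : ℚ) + i * r) ≠ 0 :=
      prod_ne_zero_iff.2 fun i hi ↦ hne i (by simp at hi; omega)
    have : (z : ℚ) * ∏ i ∈ range (m + 1), ((a : ℚ) + i * r) = (-1) ^ m * (m ! * r ^ m * L) := by
      rw [hz, mul_div_assoc', div_mul_cancel₀ _ hP]; ring
    exact_mod_cast this
  have : ((∏ i ∈ range (m + 1), (a + i * r) : ℕ) : ℤ) ∣ (m ! * r ^ m * L : ℕ) := by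
    rw [← (isUnit_neg_one.pow m).dvd_mul_left]
    exact ⟨z, by push_cast at hzP ⊢; rw [← hzP]; ring⟩
  exact_mod_cast this

theorem succ_mul_choose_mul_pow_le_of_dvd {u₀ r L k m : ℕ} (hcop : u₀.Coprime r) (hL : L ≠ 0)
    (h : ∀ i ≤ m, u₀ + (k + 1 + i) * r ∣ L) :
    (m + 1) * (k + m + 1).choose (m + 1) * r ^ (m + 1) ≤ L := by
  set a := u₀ + (k + 1) * r
  have hterm : ∀ i, a + i * r = u₀ + (k + 1 + i) * r := fun i ↦ by ring
  have hdvd : ∏ i ∈ range (m + 1), (a + i * r) ∣ m ! * L := by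
    have hcop' : (∏ i ∈ range (m + 1), (a + i * r)).Coprime (r ^ m) :=
      Coprime.pow_right _ <| Coprime.prod_left fun i _ ↦ by
        rw [hterm]; exact (coprime_add_mul_right_left _ _ _).2 hcop
    refine hcop'.dvd_of_dvd_mul_left ?_
    rw [mul_left_comm, ← mul_assoc]
    exact prod_range_add_mul_dvd a r L m fun i hi ↦ hterm i ▸ h i hi
  have hlower : r ^ (m + 1) * (k + 1).ascFactorial (m + 1) ≤ ∏ i ∈ range (m + 1), (a + i * r) := by
    rw [ascFactorial_eq_prod_range, ← card_range (m + 1), ← prod_const, card_range,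
      ← prod_mul_distrib]
    exact prod_le_prod' fun i _ ↦ by rw [hterm]; nlinarith
  rw [ascFactorial_eq_factorial_mul_choose, factorial_succ] at hlower
  refine le_of_mul_le_mul_left ?_ (factorial_pos m)
  calc m ! * ((m + 1) * (k + m + 1).choose (m + 1) * r ^ (m + 1))
      = r ^ (m + 1) * ((m + 1) * m ! * (k + (m + 1)).choose (m + 1)) := by
        rw [← add_assoc]; ring
    _ ≤ m ! * L := hlower.trans (le_of_dvd (by positivity) hdvd)

theorem mul_add_one_pow_add_sub_one_pow_le {R : Type*} [CommRing R] [LinearOrder R]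
    [IsStrictOrderedRing R] {c x B : R} {M : ℕ} (hc : 0 ≤ c)
    (h : ∀ j ≤ M, c * (M.choose j * x ^ j) ≤ B) :
    c * ((x + 1) ^ M + (x - 1) ^ M) ≤ (M + 2) * B := by
  have hexpand : (x + 1) ^ M + (x - 1) ^ M =
      ∑ j ∈ range (M + 1), (1 + (-1) ^ (M - j)) * (M.choose j * x ^ j) := by
    rw [add_pow, sub_eq_add_neg, add_pow, ← sum_add_distrib]
    refine sum_congr rfl fun j _ ↦ ?_
    simp only [one_pow]; ring
  have hweights : ∑ j ∈ range (M + 1), (1 + (-1 : R) ^ (M - j)) ≤ M + 2 := by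
    have hreflect : ∑ j ∈ range (M + 1), (-1 : R) ^ (M - j) = ∑ j ∈ range (M + 1), (-1) ^ j := by
      simpa using sum_range_reflect (fun j ↦ (-1 : R) ^ j) (M + 1)
    rw [sum_add_distrib, hreflect, neg_one_geom_sum]
    simp only [sum_const, card_range, nsmul_eq_mul, mul_one]
    push_cast
    split_ifs <;> linarith
  have hB : 0 ≤ B := hc.trans (by simpa using h 0 (zero_le _))
  calc c * ((x + 1) ^ M + (x - 1) ^ M)
      = ∑ j ∈ range (M + 1), (1 + (-1) ^ (M - j)) * (c * (M.choose j * x ^ j)) := by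
        rw [hexpand, mul_sum]; exact sum_congr rfl fun j _ ↦ by ring
    _ ≤ ∑ j ∈ range (M + 1), (1 + (-1) ^ (M - j)) * B := by
        refine sum_le_sum fun j hj ↦ mul_le_mul_of_nonneg_left (h j (by simp at hj; omega)) ?_
        rcases (M - j).even_or_odd with hp | hp <;> simp [hp.neg_one_pow]
    _ = (∑ j ∈ range (M + 1), (1 + (-1 : R) ^ (M - j))) * B := by rw [sum_mul]
    _ ≤ (M + 2) * B := mul_le_mul_of_nonneg_right hweights hB

theorem stmt_8_general (u₀ r : ℕ) (hu₀ : 0 < u₀)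
    (hcop : Nat.Coprime u₀ r) (u : ℕ → ℕ) (hu : ∀ k, u k = u₀ + k * r)
    (n : ℕ) :
    (((Finset.range (n + 1)).lcm u : ℕ) : ℝ) ≥
      ((n : ℝ) / (n + 1)) * r * (((r : ℝ) + 1) ^ (n - 1) + ((r : ℝ) - 1) ^ (n - 1)) := by
  set L := (range (n + 1)).lcm u
  have hdvd : ∀ j ≤ n, u₀ + j * r ∣ L := fun j hj ↦ hu j ▸ dvd_lcm (mem_range.2 (by omega))
  have hL : L ≠ 0 := fun hL ↦ by
    obtain ⟨j, -, hj⟩ := lcm_eq_zero_iff.1 hL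
    rw [hu] at hj
    omega
  cases n with
  | zero => simp
  | succ M =>
    have hterms : ∀ j ≤ M, ((M + 1) * r : ℝ) * (M.choose j * r ^ j) ≤ L := fun j hj ↦ by
      have hblock := succ_mul_choose_mul_pow_le_of_dvd (k := M - j) (m := j) hcop hL
        fun i hi ↦ hdvd _ (by omega)
      rw [show M - j + j + 1 = M + 1 by omega, mul_comm (j + 1), ← add_one_mul_choose_eq] at hblock
      calc ((M + 1) * r : ℝ) * (M.choose j * r ^ j) = ((M + 1) * M.choose j * r ^ (j + 1) : ℕ) := by
            push_cast; ring
        _ ≤ L := by exact_mod_cast hblock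
    have hbound := mul_add_one_pow_add_sub_one_pow_le (by positivity) hterms
    rw [add_tsub_cancel_right, ge_iff_le, div_mul_eq_mul_div, div_mul_eq_mul_div,
      div_le_iff₀ (by positivity)]
    push_cast
    linarith

theorem stmt_8 (u₀ r : ℕ) (hu₀ : 0 < u₀) (hr : 0 < r)
    (hcop : Nat.Coprime u₀ r) (u : ℕ → ℕ) (hu : ∀ k, u k = u₀ + k * r)
    (n : ℕ) (hn : 1 ≤ n) :
    (((Finset.range (n + 1)).lcm u : ℕ) : ℝ) ≥
      ((n : ℝ) / (n + 1)) * r * (((r : ℝ) + 1) ^ (n - 1) + ((r : ℝ) - 1) ^ (n - 1)) :=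
  stmt_8_general u₀ r hu₀ hcop u hu n
end

section
/- Let (u_k) be an arithmetic progression with positive first term u_0 and positive common difference r, gcd(u_0, r) = 1. Then for every integer n with n ≥ u_0 − (3r+1)/2 and n ≥ 0, lcm{u_0, ..., u_n} ≥ (1/π)·√r·(r+1)^{n − 1 + u_0/r}. -/
/-!
Two facts combine. First, since `gcd(u₀, r) = 1`, a prime power dividing two terms `u_i, u_j`
divides `j - i`; comparing `p`-adic valuations with the term of maximal valuation gives
`u_k ⋯ u_n ∣ (n - k)! · lcm(u_k, …, u_n)` for every `k ≤ n`. Second, with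
`B(n) = √r / π · (r + 1)^(n - 1 + u₀/r)`, some window `k ≤ n` satisfies
`(n - k)! · B(n) ≤ u_k ⋯ u_n`. This is proved by induction on `n`: passing from `n` to `n + 1`
multiplies `B` by `r + 1`, and either keeping `k` or moving to `k + 1` multiplies the quotient
`u_k ⋯ u_n / (n - k)!` by at least `r + 1`. The induction starts at the smallest admissible `n`,
where `k = 0` works: for `n = 0` by convexity of `x ↦ (r + 1)^(x/r)`, and for
`u₀ ≈ n + 3r/2` by comparing `log (u₀ ⋯ u_n / n!)` with the integral of
`log (x + u₀/r) - log x`.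
-/

open Real Finset
open scoped Nat

theorem prod_erase_natAbs_sub_dvd_factorial {k n j₀ : ℕ} (hj₀ : j₀ ∈ Icc k n) :
    ∏ j ∈ (Icc k n).erase j₀, ((j : ℤ) - j₀).natAbs ∣ (n - k)! := by
  rw [mem_Icc] at hj₀
  have hsplit : (Icc k n).erase j₀ = Ico k j₀ ∪ Ioc j₀ n := by
    ext j; simp only [mem_erase, mem_Icc, mem_union, mem_Ico, mem_Ioc]; omega
  have hleft : ∏ j ∈ Ico k j₀, ((j : ℤ) - j₀).natAbs = (j₀ - k)! := by
    rw [prod_Ico_eq_prod_range, ← Nat.descFactorial_self, Nat.descFactorial_eq_prod_range]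
    refine prod_congr rfl fun i hi => ?_
    rw [mem_range] at hi
    omega
  have hright : ∏ j ∈ Ioc j₀ n, ((j : ℤ) - j₀).natAbs = (n - j₀)! := by
    rw [← Ico_add_one_add_one_eq_Ioc, prod_Ico_eq_prod_range, ← prod_range_add_one_eq_factorial]
    refine prod_congr (by congr 1; omega) fun i _ => ?_
    omega
  rw [hsplit, prod_union (disjoint_left.2 fun j h₁ h₂ => by
    simp only [mem_Ico, mem_Ioc] at h₁ h₂; omega), hleft, hright]
  simpa [show j₀ - k + (n - j₀) = n - k by omega] using
    Nat.factorial_mul_factorial_dvd_factorial_add (j₀ - k) (n - j₀)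

section Divisibility

variable {u₀ r : ℕ} {u : ℕ → ℕ}

theorem coprime_of_dvd_progression (hcop : u₀.Coprime r) (hu : ∀ k, u k = u₀ + k * r)
    {d j : ℕ} (hd : d ∣ u j) : d.Coprime r := by
  have hg : d.gcd r ∣ u₀ + j * r := (Nat.gcd_dvd_left d r).trans (hu j ▸ hd)
  have hgu : d.gcd r ∣ u₀ :=
    (Nat.dvd_add_left (dvd_mul_of_dvd_right (Nat.gcd_dvd_right d r) j)).1 hg
  exact Nat.dvd_one.1 (hcop.gcd_eq_one ▸ Nat.dvd_gcd hgu (Nat.gcd_dvd_right d r))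

theorem dvd_natAbs_sub_of_dvd_progression (hcop : u₀.Coprime r) (hu : ∀ k, u k = u₀ + k * r)
    {d i j : ℕ} (hi : d ∣ u i) (hj : d ∣ u j) : d ∣ ((j : ℤ) - i).natAbs := by
  have hdiff : (u j : ℤ) - u i = r * ((j : ℤ) - i) := by rw [hu, hu]; push_cast; ring
  have hdvd : (d : ℤ) ∣ r * ((j : ℤ) - i) :=
    hdiff ▸ dvd_sub (Int.natCast_dvd_natCast.2 hj) (Int.natCast_dvd_natCast.2 hi)
  have hcop' : IsCoprime (d : ℤ) r :=
    Nat.isCoprime_iff_coprime.2 (coprime_of_dvd_progression hcop hu hi)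
  exact Int.natCast_dvd.1 (hcop'.dvd_of_dvd_mul_left hdvd)

theorem prod_Icc_dvd_factorial_mul_lcm (hu₀ : 0 < u₀) (hcop : u₀.Coprime r)
    (hu : ∀ k, u k = u₀ + k * r) (k n : ℕ) :
    ∏ j ∈ Icc k n, u j ∣ (n - k)! * (Icc k n).lcm u := by
  obtain hempty | hne := (Icc k n).eq_empty_or_nonempty
  · simp [hempty]
  have hpos : ∀ j, u j ≠ 0 := fun j => by rw [hu]; positivity
  have hlcm : (Icc k n).lcm u ≠ 0 := by
    rw [Ne, Finset.lcm_eq_zero_iff]; exact fun ⟨j, _, hj⟩ => hpos j hj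
  refine (Nat.factorization_prime_le_iff_dvd (prod_ne_zero_iff.2 fun j _ => hpos j)
    (mul_ne_zero (Nat.factorial_ne_zero _) hlcm)).1 fun p hp => ?_
  -- Against a term of maximal `p`-valuation, the `p`-part of every other term divides the
  -- distance between their indices.
  obtain ⟨j₀, hj₀, hmax⟩ := exists_max_image (Icc k n) (fun j => (u j).factorization p) hne
  have hterm : ∀ j ∈ (Icc k n).erase j₀,
      (u j).factorization p ≤ ((j : ℤ) - j₀).natAbs.factorization p := by
    intro j hj
    have hdist : ((j : ℤ) - j₀).natAbs ≠ 0 := by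
      have := ne_of_mem_erase hj; omega
    refine (hp.pow_dvd_iff_le_factorization hdist).1
      (dvd_natAbs_sub_of_dvd_progression hcop hu ?_ (Nat.ordProj_dvd _ _))
    exact (pow_dvd_pow p (hmax j (mem_of_mem_erase hj))).trans (Nat.ordProj_dvd _ _)
  have hdist_ne : ∏ j ∈ (Icc k n).erase j₀, ((j : ℤ) - j₀).natAbs ≠ 0 :=
    ne_zero_of_dvd_ne_zero (Nat.factorial_ne_zero _) (prod_erase_natAbs_sub_dvd_factorial hj₀)
  calc (∏ j ∈ Icc k n, u j).factorization p
      = (u j₀).factorization p + ∑ j ∈ (Icc k n).erase j₀, (u j).factorization p := by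
        rw [Nat.factorization_prod fun j _ => hpos j, sum_apply', ← add_sum_erase _ _ hj₀]
    _ ≤ ((Icc k n).lcm u).factorization p
          + (∏ j ∈ (Icc k n).erase j₀, ((j : ℤ) - j₀).natAbs).factorization p := by
        gcongr
        · exact (Nat.factorization_le_iff_dvd (hpos _) hlcm).2 (dvd_lcm hj₀) p
        · rw [Nat.factorization_prod fun j hj => ?_, sum_apply']
          · exact sum_le_sum hterm
          · have := ne_of_mem_erase hj; omega
    _ ≤ ((n - k)! * (Icc k n).lcm u).factorization p := by
        rw [Nat.factorization_mul (Nat.factorial_ne_zero _) hlcm, Finsupp.add_apply, add_comm]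
        gcongr
        exact (Nat.factorization_le_iff_dvd hdist_ne (Nat.factorial_ne_zero _)).2
          (prod_erase_natAbs_sub_dvd_factorial hj₀) p

end Divisibility

theorem mul_log_one_add_div_le {w y Y : ℝ} (hw : 0 < w) (hy : 0 < y) (hyY : y ≤ Y) :
    y * log (1 + w / y) ≤ Y * log (1 + w / Y) := by
  have hY : 0 < Y := hy.trans_le hyY
  have hsec := strictConcaveOn_log_Ioi.concaveOn.neg.secant_mono (a := 1) (x := 1 + w / Y)
    (y := 1 + w / y) (by norm_num) (by simp only [Set.mem_Ioi]; positivity)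
    (by simp only [Set.mem_Ioi]; positivity) (by simp [hw.ne', hY.ne']) (by simp [hw.ne', hy.ne'])
    (by gcongr)
  simp only [Pi.neg_apply, log_one, neg_zero, sub_zero, add_sub_cancel_left,
    div_div_eq_mul_div] at hsec
  rw [div_le_div_iff_of_pos_right hw] at hsec
  linarith

theorem sub_le_sum_log_add_sub_log {a : ℝ} (ha : 0 < a) (m : ℕ) :
    (1 + m + a) * log (1 + m + a) - (1 + m) * log (1 + m) - (1 + a) * log (1 + a)
      ≤ ∑ i ∈ range m, (log (1 + i + a) - log (1 + i)) := by
  have hanti : AntitoneOn (fun x => log (x + a) - log x) (Set.Icc 1 (1 + m)) := by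
    intro x hx y hy hxy
    have hx0 : 0 < x := by linarith [hx.1]
    have hy0 : 0 < y := by linarith [hy.1]
    have h := log_le_log (by positivity) (by nlinarith : (y + a) * x ≤ (x + a) * y)
    rw [log_mul (by positivity) hx0.ne', log_mul (by positivity) hy0.ne'] at h
    dsimp only
    linarith
  have hint : ∫ x in (1 : ℝ)..1 + m, (log (x + a) - log x)
      = (1 + m + a) * log (1 + m + a) - (1 + m) * log (1 + m) - (1 + a) * log (1 + a) := by
    have hshift : IntervalIntegrable (fun x => log (x + a)) MeasureTheory.volume 1 (1 + m) := by
      simpa using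
        (intervalIntegral.intervalIntegrable_log' (a := 1 + a) (b := 1 + m + a)).comp_add_right a
    rw [intervalIntegral.integral_sub hshift intervalIntegral.intervalIntegrable_log',
      intervalIntegral.integral_comp_add_right log a, integral_log, integral_log, log_one]
    ring
  rw [← hint]
  exact hanti.integral_le_sum

/- `G a = (M + a) log (M + a) - a log a` is concave, so `G a ≥ G y + (a - y) G' a` with
`y = M / r`, at which `M + y = y (r + 1)`. -/
theorem mul_log_add_sub_mul_log_ge {M r a : ℝ} (hM : 0 < M) (hr : 0 < r) (ha : M / r < a) :
    (M + a) * log (r + 1) - M * log r - (a - M / r) * log (1 + (r * a - M) / (M + a))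
      ≤ (M + a) * log (M + a) - a * log a - M * log M := by
  obtain ⟨y, hy_def⟩ : ∃ y, y = M / r := ⟨_, rfl⟩
  rw [← hy_def] at ha ⊢
  have hy : 0 < y := by rw [hy_def]; positivity
  have ha0 : 0 < a := hy.trans ha
  have hlogy : log y = log M - log r := by rw [hy_def, log_div hM.ne' hr.ne']
  have hgrow : (M + y) * log (M + y) - M * log M - y * log y
      = (M + y) * log (r + 1) - M * log r := by
    have hMy : M + y = y * (r + 1) := by rw [hy_def]; field_simp
    rw [hMy, log_mul hy.ne' (by positivity), hlogy, ← hMy]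
    ring
  have hratio : log (M + a) - log a = log (r + 1) - log (1 + (r * a - M) / (M + a)) := by
    have hsplit : a * (r + 1) = (M + a) * (1 + (r * a - M) / (M + a)) := by field_simp; ring
    have hq : 0 < 1 + (r * a - M) / (M + a) := by
      have : 0 < r * a - M := by rw [hy_def, div_lt_iff₀' hr] at ha; linarith
      positivity
    have := congrArg log hsplit
    rw [log_mul ha0.ne' (by positivity), log_mul (by positivity) hq.ne'] at this
    linarith
  have hmono := mul_log_one_add_div_le (sub_pos.2 ha) hy (by linarith : y ≤ M + y)
  rw [show 1 + (a - y) / y = a / y by field_simp; ring,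
    show 1 + (a - y) / (M + y) = (M + a) / (M + y) by field_simp; ring,
    log_div ha0.ne' hy.ne', log_div (by positivity) (by positivity)] at hmono
  linear_combination hmono - hgrow - (a - y) * hratio

theorem one_le_log_pi : 1 ≤ log π := by
  rw [le_log_iff_exp_le pi_pos]
  exact (exp_one_lt_d9.trans (by norm_num)).le.trans pi_gt_d2.le

theorem log_one_add_three_mul_div_seven_le {r : ℝ} (hr : 1 ≤ r) :
    3 / 2 * log (1 + 3 * r / 7) ≤ 2 * log (r + 1) - log r / 2 - 2 / 3 := by
  have hlog : 4 / 3 ≤ log 3.8 := by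
    rw [le_log_iff_exp_le (by norm_num)]
    refine le_of_pow_le_pow_left₀ three_ne_zero (by norm_num) ?_
    calc exp (4 / 3) ^ 3 = exp 1 ^ 4 := by rw [← exp_nat_mul, ← exp_nat_mul]; norm_num
      _ ≤ 2.7182818286 ^ 4 := by gcongr; exact exp_one_lt_d9.le
      _ ≤ 3.8 ^ 3 := by norm_num
  have hpoly : 3.8 * ((1 + 3 * r / 7) ^ 3 * r) ≤ (r + 1) ^ 4 := by
    nlinarith [sq_nonneg r, sq_nonneg (r - 1), sq_nonneg (r * r - r)]
  have := log_le_log (by positivity) hpoly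
  rw [log_mul (by norm_num) (by positivity), log_mul (by positivity) (by positivity),
    log_pow, log_pow] at this
  push_cast at this
  linarith

/- With `M = m + 1` and `a = u₀ / r`, the left side is `log (lcmBound u₀ r m)` and the right
side is the integral lower bound for `log (u₀ ⋯ u_m / m!)`. -/
theorem log_bound_le_integral_estimate {r M a : ℝ} (hr : 1 ≤ r) (hM : 2 ≤ M)
    (h₁ : M - 1 + 3 * r / 2 ≤ r * a) (h₂ : r * a ≤ M - 1 + (3 * r + 1) / 2) :
    log r / 2 - log π + (M - 2 + a) * log (r + 1)
      ≤ log (r * a) + (M - 1) * log r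
        + ((M + a) * log (M + a) - M * log M - (1 + a) * log (1 + a)) := by
  have hr0 : 0 < r := by linarith
  have ha : 3 / 2 ≤ a := by nlinarith
  have ha0 : 0 < a := by linarith
  have hMa : 7 / 2 ≤ M + a := by linarith
  have hgap : 0 < r * a - M := by linarith
  have hentropy := mul_log_add_sub_mul_log_ge (M := M) (by linarith) hr0
    (by rw [div_lt_iff₀' hr0]; linarith)
  have hE1 : (1 + a) * (log (1 + a) - log a) ≤ 5 / 3 := by
    have hlog : log (1 + a) - log a ≤ 1 / a := by
      rw [← log_div (by linarith) ha0.ne']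
      have := log_le_sub_one_of_pos (show 0 < (1 + a) / a by positivity)
      have : (1 + a) / a - 1 = 1 / a := by field_simp; ring
      linarith
    have hinv : 1 / a ≤ 2 / 3 := by rw [div_le_iff₀ ha0]; linarith
    calc (1 + a) * (log (1 + a) - log a) ≤ (1 + a) * (1 / a) := by gcongr
      _ = 1 + 1 / a := by field_simp; ring
      _ ≤ 5 / 3 := by linarith
  have hE2 : (a - M / r) * log (1 + (r * a - M) / (M + a)) ≤ 3 / 2 * log (1 + 3 * r / 7) := by
    have hd : a - M / r ≤ 3 / 2 := by
      rw [show a - M / r = (r * a - M) / r by field_simp, div_le_iff₀ hr0]; linarith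
    have hq : (r * a - M) / (M + a) ≤ 3 * r / 7 := by
      rw [div_le_iff₀ (by linarith)]; nlinarith
    have hq0 : 0 ≤ (r * a - M) / (M + a) := by positivity
    have hlog : log (1 + (r * a - M) / (M + a)) ≤ log (1 + 3 * r / 7) := by gcongr
    exact mul_le_mul hd hlog (log_nonneg (by linarith)) (by norm_num)
  have hlog_ra : log (r * a) = log r + log a := log_mul hr0.ne' ha0.ne'
  linarith [one_le_log_pi, log_one_add_three_mul_div_seven_le hr]

theorem rpow_inv_le_two {r : ℝ} (hr : 1 ≤ r) : (r + 1) ^ r⁻¹ ≤ 2 := by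
  have hbern := one_add_mul_self_le_rpow_one_add (s := 1) (by norm_num) hr
  calc (r + 1) ^ r⁻¹ ≤ ((2 : ℝ) ^ r) ^ r⁻¹ := by
        gcongr; norm_num at hbern; linarith
    _ = 2 := rpow_rpow_inv (by norm_num) (by positivity)

theorem sqrt_div_pi_mul_rpow_three_mul_add_one_div_two_le {r : ℝ} (hr : 1 ≤ r) :
    √r / π * (r + 1) ^ ((3 * r + 1) / 2 / r - 1) ≤ (3 * r + 1) / 2 := by
  have hr1 : 0 < r + 1 := by linarith
  have hexp : (r + 1) ^ ((3 * r + 1) / 2 / r - 1) = √((r + 1) * (r + 1) ^ r⁻¹) := by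
    rw [sqrt_eq_rpow, mul_rpow hr1.le (by positivity), ← rpow_mul hr1.le, ← rpow_add hr1]
    congr 1
    field_simp
    ring
  calc √r / π * (r + 1) ^ ((3 * r + 1) / 2 / r - 1) ≤ √r / π * √((r + 1) * 2) := by
        rw [hexp]; gcongr; exact rpow_inv_le_two hr
    _ = √(2 * r * (r + 1)) / π := by
        rw [mul_comm (√r / π), ← mul_div_assoc, ← sqrt_mul (by positivity)]; ring_nf
    _ ≤ (3 * r + 1) / 2 := by
        rw [div_le_iff₀ pi_pos, sqrt_le_left (by positivity)]
        calc 2 * r * (r + 1) ≤ ((3 * r + 1) / 2 * 3) ^ 2 := by nlinarith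
          _ ≤ ((3 * r + 1) / 2 * π) ^ 2 := by gcongr; exact pi_gt_three.le

theorem sqrt_div_pi_mul_rpow_le {r x : ℝ} (hr : 1 ≤ r) (hx : 1 ≤ x)
    (hx' : x ≤ (3 * r + 1) / 2) :
    √r / π * (r + 1) ^ (x / r - 1) ≤ x := by
  have hr0 : 0 < r := by linarith
  have hr1 : 0 < r + 1 := by linarith
  set b := (r + 1) ^ r⁻¹ with hb_def
  have hb : b ≤ 2 := rpow_inv_le_two hr
  have hpow : ∀ t, (r + 1) ^ (t / r - 1) = b ^ t / (r + 1) := fun t => by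
    rw [rpow_sub hr1, rpow_one, hb_def, ← rpow_mul hr1.le, inv_mul_eq_div]
  set g : ℝ → ℝ := fun t => √r / π * (r + 1) ^ (t / r - 1) - t with hg_def
  -- `g` is an exponential minus a linear function, so it suffices to check the endpoints.
  have hconv : ConvexOn ℝ Set.univ g := by
    have : g = fun t => √r / π / (r + 1) * b ^ t - t := by
      funext t; simp only [hg_def, hpow]; ring
    rw [this]
    exact ((convexOn_rpow_left (by positivity)).smul (by positivity)).sub (concaveOn_id convex_univ)
  have hsqrt : 2 * √r ≤ r + 1 := by
    nlinarith [sq_nonneg (√r - 1), sq_sqrt hr0.le, sqrt_nonneg r]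
  have hleft : g 1 ≤ 0 := by
    simp only [hg_def, hpow, rpow_one, sub_nonpos]
    calc √r / π * (b / (r + 1)) ≤ √r / π * (2 / (r + 1)) := by gcongr
      _ = 2 * √r / (π * (r + 1)) := by field_simp
      _ ≤ 1 := by
        rw [div_le_one (by positivity)]
        nlinarith [pi_gt_three]
  have hright : g ((3 * r + 1) / 2) ≤ 0 := by
    simpa only [hg_def, sub_nonpos] using sqrt_div_pi_mul_rpow_three_mul_add_one_div_two_le hr
  have hmem : x ∈ segment ℝ 1 ((3 * r + 1) / 2) := by
    rw [segment_eq_Icc (by linarith)]; exact ⟨hx, hx'⟩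
  have := hconv.le_on_segment (Set.mem_univ _) (Set.mem_univ _) hmem
  simp only [hg_def] at this ⊢
  linarith [max_le hleft hright]

noncomputable def lcmBound (u₀ r n : ℕ) : ℝ :=
  √r / π * ((r : ℝ) + 1) ^ ((n : ℝ) - 1 + u₀ / r)

section Bound

variable {u₀ r : ℕ} {u : ℕ → ℕ}

theorem lcmBound_succ (u₀ r n : ℕ) : lcmBound u₀ r (n + 1) = lcmBound u₀ r n * (r + 1) := by
  rw [lcmBound, lcmBound, mul_assoc, ← rpow_add_one (by positivity)]
  push_cast
  ring_nf

theorem lcmBound_zero_le (hu₀ : 0 < u₀) (hr : 0 < r) (h : 2 * u₀ ≤ 3 * r + 1) :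
    lcmBound u₀ r 0 ≤ u₀ := by
  have hx : (u₀ : ℝ) ≤ (3 * r + 1) / 2 := by
    rw [le_div_iff₀ two_pos]; exact_mod_cast (by omega : u₀ * 2 ≤ 3 * r + 1)
  have := sqrt_div_pi_mul_rpow_le (by exact_mod_cast hr) (by exact_mod_cast hu₀) hx
  rw [lcmBound]
  convert this using 3
  push_cast
  ring

theorem factorial_mul_lcmBound_le_prod_Icc_zero (hr : 0 < r) (hu : ∀ k, u k = u₀ + k * r)
    {m : ℕ} (hm : 1 ≤ m) (h₁ : 2 * m + 3 * r ≤ 2 * u₀)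
    (h₂ : 2 * u₀ ≤ 2 * m + 3 * r + 1) :
    (m ! : ℝ) * lcmBound u₀ r m ≤ ∏ j ∈ Icc 0 m, (u j : ℝ) := by
  have hr0 : (0 : ℝ) < r := by exact_mod_cast hr
  have hu₀ : 0 < u₀ := by omega
  have hpos : ∀ j, (0 : ℝ) < u j := fun j => by rw [hu]; positivity
  obtain ⟨a, ha_def⟩ : ∃ a : ℝ, a = u₀ / r := ⟨_, rfl⟩
  have ha : 0 < a := by rw [ha_def]; positivity
  have hra : (r : ℝ) * a = u₀ := by rw [ha_def]; field_simp
  have hterm : ∀ i : ℕ, (u (i + 1) : ℝ) = r * (1 + i + a) := fun i => by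
    rw [hu, mul_add, mul_add, hra]; push_cast; ring
  have hlog_prod : log (∏ j ∈ Icc 0 m, (u j : ℝ))
      = log u₀ + m * log r + ∑ i ∈ range m, log (1 + i + a) := by
    rw [← Nat.range_succ_eq_Icc_zero, prod_range_succ',
      log_mul (prod_pos fun i _ => hpos (i + 1)).ne' (hpos 0).ne',
      log_prod fun i _ => (hpos (i + 1)).ne', hu 0]
    simp only [hterm, zero_mul, add_zero]
    rw [sum_congr rfl fun i _ => log_mul hr0.ne' (by positivity), sum_add_distrib, sum_const,
      card_range, nsmul_eq_mul]
    ring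
  have hlog_fact : log (m ! : ℝ) = ∑ i ∈ range m, log (1 + i) := by
    rw [← prod_range_add_one_eq_factorial, Nat.cast_prod, log_prod]
    · push_cast; simp only [add_comm]
    · intro i _; positivity
  have hlog_bound : log (lcmBound u₀ r m) = log r / 2 - log π + (m - 1 + a) * log (r + 1) := by
    rw [lcmBound, log_mul (by positivity) (by positivity), log_div (by positivity) pi_ne_zero,
      log_sqrt hr0.le, log_rpow (by positivity), ha_def]
  have hbound_pos : 0 < lcmBound u₀ r m := by rw [lcmBound]; positivity
  rw [← log_le_log_iff (by positivity) (prod_pos fun j _ => hpos j),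
    log_mul (by positivity) hbound_pos.ne', hlog_prod,
    hlog_fact, hlog_bound]
  have h₁' : (2 * m + 3 * r : ℝ) ≤ 2 * u₀ := by exact_mod_cast h₁
  have h₂' : (2 * u₀ : ℝ) ≤ 2 * m + 3 * r + 1 := by exact_mod_cast h₂
  have hsum := sub_le_sum_log_add_sub_log ha m
  have hest := log_bound_le_integral_estimate (M := 1 + m) (a := a)
    (Nat.one_le_cast.2 hr) (by linarith [(Nat.one_le_cast.2 hm : (1 : ℝ) ≤ m)])
    (by rw [hra]; linarith) (by rw [hra]; linarith)
  rw [hra] at hest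
  rw [sum_sub_distrib] at hsum
  linarith

theorem factorial_mul_lcmBound_le_prod_Icc_succ_right (hu : ∀ k, u k = u₀ + k * r) {k n : ℕ}
    (hk : k ≤ n) (hkn : n + 1 ≤ u₀ + k * (r + 1))
    (h : ((n - k)! : ℝ) * lcmBound u₀ r n ≤ ∏ j ∈ Icc k n, (u j : ℝ)) :
    ((n + 1 - k)! : ℝ) * lcmBound u₀ r (n + 1) ≤ ∏ j ∈ Icc k (n + 1), (u j : ℝ) := by
  obtain ⟨d, rfl⟩ := Nat.exists_eq_add_of_le hk
  have hnew : (d + 1) * (r + 1) ≤ u (k + d + 1) := by rw [hu]; nlinarith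
  rw [show k + d + 1 - k = d + 1 by omega, Nat.factorial_succ, prod_Icc_succ_top (by omega),
    lcmBound_succ]
  rw [show k + d - k = d by omega] at h
  calc ((d + 1) * d ! : ℕ) * (lcmBound u₀ r (k + d) * (r + 1))
      = (d ! * lcmBound u₀ r (k + d)) * ((d + 1 : ℕ) * (r + 1 : ℕ) : ℕ) := by
        push_cast; ring
    _ ≤ (∏ j ∈ Icc k (k + d), (u j : ℝ)) * u (k + d + 1) := by gcongr

theorem factorial_mul_lcmBound_le_prod_Icc_succ_succ (hu₀ : 0 < u₀)
    (hu : ∀ k, u k = u₀ + k * r) {k n : ℕ} (hkn : u₀ + k * (r + 1) ≤ n + 1)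
    (h : ((n - k)! : ℝ) * lcmBound u₀ r n ≤ ∏ j ∈ Icc k n, (u j : ℝ)) :
    ((n + 1 - (k + 1))! : ℝ) * lcmBound u₀ r (n + 1)
      ≤ ∏ j ∈ Icc (k + 1) (n + 1), (u j : ℝ) := by
  have hk : k ≤ n := by nlinarith
  have hshift : u k * (r + 1) ≤ u (n + 1) := by rw [hu, hu]; nlinarith
  have hsplit : (u k : ℝ) * ∏ j ∈ Icc (k + 1) (n + 1), (u j : ℝ)
      = (∏ j ∈ Icc k n, (u j : ℝ)) * u (n + 1) := by
    rw [Icc_add_one_left_eq_Ioc, ← prod_Icc_succ_top (by omega), ← Ioc_insert_left (by omega),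
      prod_insert left_notMem_Ioc]
  have huk : (0 : ℝ) < u k := by rw [hu]; positivity
  refine le_of_mul_le_mul_left ?_ huk
  rw [hsplit, Nat.add_sub_add_right, lcmBound_succ]
  calc (u k : ℝ) * ((n - k)! * (lcmBound u₀ r n * (r + 1)))
      = ((n - k)! * lcmBound u₀ r n) * (u k * (r + 1) : ℕ) := by push_cast; ring
    _ ≤ (∏ j ∈ Icc k n, (u j : ℝ)) * u (n + 1) := by gcongr

theorem exists_factorial_mul_lcmBound_le_prod_Icc (hu₀ : 0 < u₀) (hr : 0 < r)
    (hu : ∀ k, u k = u₀ + k * r) :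
    ∀ n, 2 * u₀ ≤ 2 * n + 3 * r + 1 →
      ∃ k ≤ n, ((n - k)! : ℝ) * lcmBound u₀ r n ≤ ∏ j ∈ Icc k n, (u j : ℝ)
  | 0, h => ⟨0, le_rfl, by simpa [hu] using lcmBound_zero_le hu₀ hr (by simpa using h)⟩
  | n + 1, h => by
    by_cases hn : 2 * u₀ ≤ 2 * n + 3 * r + 1
    · obtain ⟨k, hk, hQ⟩ := exists_factorial_mul_lcmBound_le_prod_Icc hu₀ hr hu n hn
      by_cases hkn : n + 1 ≤ u₀ + k * (r + 1)
      · exact ⟨k, by omega, factorial_mul_lcmBound_le_prod_Icc_succ_right hu hk hkn hQ⟩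
      · exact ⟨k + 1, by omega,
          factorial_mul_lcmBound_le_prod_Icc_succ_succ hu₀ hu (by omega) hQ⟩
    · exact ⟨0, Nat.zero_le _, by
        simpa using factorial_mul_lcmBound_le_prod_Icc_zero hr hu (by omega) (by omega) h⟩

end Bound

theorem stmt_9 (u₀ r : ℕ) (hu₀ : 0 < u₀) (hr : 0 < r)
    (hcop : Nat.Coprime u₀ r) (u : ℕ → ℕ) (hu : ∀ k, u k = u₀ + k * r)
    (n : ℕ) (hn : (n : ℝ) ≥ (u₀ : ℝ) - (3 * r + 1) / 2) :
    (((Finset.range (n + 1)).lcm u : ℕ) : ℝ) ≥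
      (1 / Real.pi) * Real.sqrt r * ((r : ℝ) + 1) ^ ((n : ℝ) - 1 + (u₀ : ℝ) / r) := by
  have hn' : 2 * u₀ ≤ 2 * n + 3 * r + 1 := by
    have : (2 * u₀ : ℝ) ≤ 2 * n + 3 * r + 1 := by linarith
    exact_mod_cast this
  obtain ⟨k, -, hbound⟩ := exists_factorial_mul_lcmBound_le_prod_Icc hu₀ hr hu n hn'
  have hdvd : ∏ j ∈ Icc k n, u j ∣ (n - k)! * (range (n + 1)).lcm u :=
    (prod_Icc_dvd_factorial_mul_lcm hu₀ hcop hu k n).trans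
      (mul_dvd_mul_left _ (lcm_mono fun j hj => by simp only [mem_Icc, mem_range] at hj ⊢; omega))
  have hlcm : (range (n + 1)).lcm u ≠ 0 := by
    rw [Ne, Finset.lcm_eq_zero_iff]
    rintro ⟨j, -, hj⟩
    rw [hu] at hj
    omega
  have hle : (∏ j ∈ Icc k n, (u j : ℝ)) ≤ (n - k)! * ((range (n + 1)).lcm u : ℕ) := by
    exact_mod_cast Nat.le_of_dvd (by positivity) hdvd
  have := le_of_mul_le_mul_left (hbound.trans hle) (by positivity)
  rw [lcmBound] at this
  rw [ge_iff_le, show 1 / π * √r = √r / π by ring]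
  exact this
end

section
/- For any integer k in {0,...,n}, any arithmetic progression u_k = u_0 + k·r with positive coprime u_0 and r satisfies lcm{u_0,...,u_n} ≥ (u_k · u_{k+1} ··· u_n)/(n−k)!. -/
/-!
Write `P(a, m) = a (a + r) ⋯ (a + m r)`. Splitting off the last or the first factor gives
`P(a, m + 1) = (a + (m + 1) r) P(a, m) = a P(a + r, m)`, and any equation `(a + d) A = a B`
forces `(a + d) A ∣ d lcm(A, B)`, because `gcd(A, B)` divides `B - A`. By induction on `m`,
`P(a, m) ∣ m! r^m lcm(a, …, a + m r)`; as every `a + i r` is coprime to `r`, the factor `r^m`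
drops out, and comparing sizes gives the bound.
-/

open Finset Nat

theorem Nat.add_mul_dvd_mul_lcm_of_add_mul_eq {a d A B : ℕ} (h : (a + d) * A = a * B) :
    (a + d) * A ∣ d * Nat.lcm A B := by
  rcases Nat.eq_zero_or_pos (Nat.gcd A B) with hg | hg
  · simp [Nat.gcd_eq_zero_iff.mp hg]
  obtain ⟨t, ht⟩ : (Nat.gcd A B : ℤ) ∣ (B : ℤ) - A :=
    (Int.natCast_dvd_natCast.mpr (Nat.gcd_dvd_right A B)).sub
      (Int.natCast_dvd_natCast.mpr (Nat.gcd_dvd_left A B))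
  have hAB : (Nat.gcd A B : ℤ) * Nat.lcm A B = A * B := by exact_mod_cast Nat.gcd_mul_lcm A B
  have hprod : (((a + d) * A : ℕ) : ℤ) * ((B : ℤ) - A) = d * (A * B) := by
    have hz : ((a + d : ℕ) : ℤ) * A = a * B := by exact_mod_cast h
    push_cast at hz ⊢; linear_combination -(A : ℤ) * hz
  refine Int.natCast_dvd_natCast.mp ⟨t, ?_⟩
  apply mul_left_cancel₀ (Int.natCast_ne_zero.mpr hg.ne')
  rw [← hAB, ht] at hprod
  push_cast at hprod ⊢
  linear_combination -hprod

theorem prod_range_add_mul_dvd_factorial_mul_pow_mul_lcm (a r m : ℕ) :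
    ∏ i ∈ range (m + 1), (a + i * r) ∣
      m ! * r ^ m * (range (m + 1)).lcm (fun i => a + i * r) := by
  induction m generalizing a with
  | zero => simp
  | succ m ih =>
    set L := (range (m + 2)).lcm (fun i => a + i * r)
    have hshift : ∀ i, a + (i + 1) * r = a + r + i * r := fun i => by ring
    have hA : ∏ i ∈ range (m + 1), (a + i * r) ∣ m ! * r ^ m * L :=
      (ih a).trans (mul_dvd_mul_left _ (lcm_mono (range_subset_range.mpr (by omega))))
    have hB : ∏ i ∈ range (m + 1), (a + r + i * r) ∣ m ! * r ^ m * L := by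
      refine (ih (a + r)).trans (mul_dvd_mul_left _ (Finset.lcm_dvd fun i hi => ?_))
      rw [← hshift]
      exact dvd_lcm (by simpa using hi)
    have htop : ∏ i ∈ range (m + 2), (a + i * r)
        = (a + (m + 1) * r) * ∏ i ∈ range (m + 1), (a + i * r) := by
      rw [prod_range_succ, mul_comm]
    have hbot : ∏ i ∈ range (m + 2), (a + i * r)
        = a * ∏ i ∈ range (m + 1), (a + r + i * r) := by
      rw [prod_range_succ', mul_comm]; simp only [hshift, zero_mul, add_zero]
    have hstep := Nat.add_mul_dvd_mul_lcm_of_add_mul_eq (d := (m + 1) * r) (htop.symm.trans hbot)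
    rw [← htop] at hstep
    calc ∏ i ∈ range (m + 2), (a + i * r)
        ∣ (m + 1) * r * Nat.lcm (∏ i ∈ range (m + 1), (a + i * r))
            (∏ i ∈ range (m + 1), (a + r + i * r)) := hstep
      _ ∣ (m + 1) * r * (m ! * r ^ m * L) := mul_dvd_mul_left _ (Nat.lcm_dvd hA hB)
      _ = (m + 1)! * r ^ (m + 1) * L := by rw [Nat.factorial_succ, pow_succ]; ring

theorem prod_range_add_mul_dvd_factorial_mul_lcm {a r : ℕ} (hcop : a.Coprime r) (m : ℕ) :
    ∏ i ∈ range (m + 1), (a + i * r) ∣ m ! * (range (m + 1)).lcm (fun i => a + i * r) := by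
  have hcoprime : Nat.Coprime (∏ i ∈ range (m + 1), (a + i * r)) (r ^ m) :=
    Nat.Coprime.pow_right _ <| Nat.Coprime.prod_left fun i _ =>
      (Nat.coprime_add_mul_right_left a r i).mpr hcop
  refine hcoprime.dvd_of_dvd_mul_left ?_
  rw [← mul_assoc, mul_comm (r ^ m)]
  exact prod_range_add_mul_dvd_factorial_mul_pow_mul_lcm a r m

theorem stmt_10_general (u₀ r : ℕ) (hu₀ : 0 < u₀)
    (hcop : Nat.Coprime u₀ r) (u : ℕ → ℕ) (hu : ∀ j, u j = u₀ + j * r)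
    (n k : ℕ) (hk : k ≤ n) :
    (((Finset.range (n + 1)).lcm u : ℕ) : ℝ) ≥
      (∏ j ∈ Finset.Icc k n, (u j : ℝ)) / (Nat.factorial (n - k) : ℝ) := by
  obtain rfl : u = fun j => u₀ + j * r := funext hu
  obtain ⟨m, rfl⟩ := Nat.exists_eq_add_of_le hk
  set a := u₀ + k * r
  have hshift : ∀ i, u₀ + (k + i) * r = a + i * r := fun i => by ring
  have hprod : ∏ j ∈ Icc k (k + m), (u₀ + j * r) = ∏ i ∈ range (m + 1), (a + i * r) := by
    rw [← Finset.Ico_add_one_right_eq_Icc, prod_Ico_eq_prod_range,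
      show k + m + 1 - k = m + 1 by omega]
    simp only [hshift]
  have hlcm : (range (m + 1)).lcm (fun i => a + i * r) ∣
      (range (k + m + 1)).lcm (fun j => u₀ + j * r) := by
    refine Finset.lcm_dvd fun i hi => ?_
    rw [← hshift]
    exact dvd_lcm (by simp only [mem_range] at hi ⊢; omega)
  have hLpos : 0 < (range (k + m + 1)).lcm (fun j => u₀ + j * r) := by
    refine Nat.pos_of_ne_zero fun hzero => ?_
    obtain ⟨j, -, hj⟩ := Finset.lcm_eq_zero_iff.mp hzero
    omega
  have hdvd := (prod_range_add_mul_dvd_factorial_mul_lcm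
    ((Nat.coprime_add_mul_right_left u₀ r k).mpr hcop) m).trans (mul_dvd_mul_left _ hlcm)
  rw [← hprod] at hdvd
  rw [ge_iff_le, div_le_iff₀ (by positivity), Nat.add_sub_cancel_left, mul_comm]
  exact_mod_cast Nat.le_of_dvd (Nat.mul_pos m.factorial_pos hLpos) hdvd

theorem stmt_10 (u₀ r : ℕ) (hu₀ : 0 < u₀) (hr : 0 < r)
    (hcop : Nat.Coprime u₀ r) (u : ℕ → ℕ) (hu : ∀ j, u j = u₀ + j * r)
    (n k : ℕ) (hk : k ≤ n) :
    (((Finset.range (n + 1)).lcm u : ℕ) : ℝ) ≥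
      (∏ j ∈ Finset.Icc k n, (u j : ℝ)) / (Nat.factorial (n - k) : ℝ) :=
  stmt_10_general u₀ r hu₀ hcop u hu n k hk
end

section
/- For every nonnegative integer k, the central-type binomial coefficient satisfies C(2k+1, k) < √2 · 4^k / √(k + 3/2). -/
/-!
From `(n + 1) * C(2n+2, n+1) = 2 (2n+1) * C(2n, n)`, the quantity `C(2n, n)^2 (2n+1) / 16^n` gets
multiplied by `(2n+1)(2n+3) / (2n+2)^2 < 1` at each step, so it stays below its value `3/4` at
`n = 1`. Since `C(2k+2, k+1) = 2 C(2k+1, k)`, the case `n = k + 1` is the claim squared.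
-/

namespace Nat

theorem centralBinom_sq_mul_lt_sixteen_pow {n : ℕ} (hn : 0 < n) :
    centralBinom n ^ 2 * (2 * n + 1) < 16 ^ n := by
  induction n, hn using Nat.le_induction with
  | base => decide
  | succ n hn ih =>
    have hrec := succ_mul_centralBinom_succ n
    refine Nat.lt_of_mul_lt_mul_left (a := (n + 1) ^ 2) ?_
    calc (n + 1) ^ 2 * (centralBinom (n + 1) ^ 2 * (2 * (n + 1) + 1))
        = ((n + 1) * centralBinom (n + 1)) ^ 2 * (2 * n + 3) := by ring
      _ = 4 * ((2 * n + 1) * (2 * n + 3)) * (centralBinom n ^ 2 * (2 * n + 1)) := by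
          rw [hrec]; ring
      _ ≤ 4 * (2 * n + 2) ^ 2 * (centralBinom n ^ 2 * (2 * n + 1)) := by gcongr; nlinarith
      _ < 4 * (2 * n + 2) ^ 2 * 16 ^ n := by gcongr
      _ = (n + 1) ^ 2 * 16 ^ (n + 1) := by ring

theorem centralBinom_succ_eq_two_mul_choose (n : ℕ) :
    centralBinom (n + 1) = 2 * (2 * n + 1).choose n := by
  rw [centralBinom, show 2 * (n + 1) = 2 * n + 1 + 1 by ring, choose_succ_succ,
    choose_symm_half]
  ring

end Nat

theorem lt_div_sqrt_of_sq_mul_lt {a b c : ℝ} (hb : 0 ≤ b) (hc : 0 < c) (h : a ^ 2 * c < b ^ 2) :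
    a < b / √c := by
  rw [lt_div_iff₀ (Real.sqrt_pos.mpr hc)]
  refine lt_of_pow_lt_pow_left₀ 2 hb ?_
  rwa [mul_pow, Real.sq_sqrt hc.le]

theorem stmt_15 (k : ℕ) :
    ((2 * k + 1).choose k : ℝ) < Real.sqrt 2 * 4 ^ k / Real.sqrt ((k : ℝ) + 3 / 2) := by
  have hnat := Nat.centralBinom_sq_mul_lt_sixteen_pow (Nat.succ_pos k)
  rw [Nat.centralBinom_succ_eq_two_mul_choose] at hnat
  have hreal : ((2 * (2 * k + 1).choose k) ^ 2 * (2 * (k + 1) + 1) : ℝ) < 16 ^ (k + 1) :=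
    mod_cast hnat
  refine lt_div_sqrt_of_sq_mul_lt (by positivity) (by positivity) ?_
  rw [mul_pow, Real.sq_sqrt zero_le_two, ← pow_mul, pow_mul']
  norm_num [pow_succ] at hreal ⊢
  linarith
end

section
/- Let u_k = a·k·(k+t) + b with integers a ≥ 1, t ≥ 0, gcd(a,b) = 1, and suppose u_0, u_1, ..., u_n are all nonzero for some positive integer n. If t = 0, then 2·u_0·u_1···u_n / (2n)! is (as a rational) a divisor of lcm{u_0,...,u_n}, i.e., lcm{u_0,...,u_n} is an integer multiple of 2·(u_0···u_n)/(2n)!; if t ≥ 1, then lcm{u_0,...,u_n} is an integer multiple of (t−1)!·(u_0···u_n)/(2n+t)!. -/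
/-!
Evaluating at `0` the Lagrange interpolant of the constant `1` at the distinct nodes `u k` gives
`∑ k, ∏ j ≠ k, u j / (u j - u k) = 1`. Multiplying by `L * M`, where `L` is the lcm of the `u k`,
writes `L * M` as an integer multiple of `∏ u k` as soon as every `W k = ∏ j ≠ k, (u j - u k)`
divides `M`. For `u k = a k (k + t) + b` one has `u j - u k = a (j - k) (j + k + t)`, so
`W k = ± a ^ n k! (n - k)! ∏ j ≠ k, (j + k + t)`, and this divides `a ^ n (2n + t)! / (t - 1)!`
(resp. `a ^ n (2n)! / 2` when `t = 0`) because `t, t + 1, …, t + 2n` splits into blocks of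
`k`, `n + 1` and `n - k` consecutive integers. Finally `a ^ n` is coprime to `∏ u k` since
`gcd(a, b) = 1`.
-/

open Finset Nat

theorem sum_prod_div_sub_eq_one {F ι : Type*} [Field F] [DecidableEq ι] {s : Finset ι}
    {v : ι → F} (hvs : Set.InjOn v s) (hs : s.Nonempty) :
    ∑ k ∈ s, ∏ j ∈ s.erase k, v j / (v j - v k) = 1 := by
  have h := congrArg (Polynomial.eval 0) (Lagrange.sum_basis hvs hs)
  simp only [Polynomial.eval_finsetSum, Lagrange.basis, Polynomial.eval_prod,
    Lagrange.basisDivisor, Polynomial.eval_mul, Polynomial.eval_C, Polynomial.eval_sub,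
    Polynomial.eval_X, Polynomial.eval_one, zero_sub] at h
  rw [← h]
  refine sum_congr rfl fun k _ => prod_congr rfl fun j _ => ?_
  rw [div_eq_mul_inv, ← neg_sub, inv_neg]
  ring

theorem prod_dvd_lcm_mul {ι : Type*} [DecidableEq ι] {s : Finset ι} {u : ι → ℤ}
    (hu : Set.InjOn u s) {M : ℤ} (hM : ∀ k ∈ s, ∏ j ∈ s.erase k, (u j - u k) ∣ M) :
    ∏ i ∈ s, u i ∣ s.lcm u * M := by
  rcases s.eq_empty_or_nonempty with rfl | hs
  · simp
  set L := s.lcm u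
  set w : ι → ℤ := fun k => ∏ j ∈ s.erase k, (u j - u k)
  refine ⟨∑ k ∈ s, L / u k * (M / w k), ?_⟩
  have hterm : ∀ k ∈ s, (L * M : ℚ) * ∏ j ∈ s.erase k, (u j : ℚ) / (u j - u k) =
      ((L / u k * (M / w k) : ℤ) : ℚ) * ∏ i ∈ s, (u i : ℚ) := by
    intro k hk
    have hL : (u k : ℚ) * (L / u k : ℤ) = L := by exact_mod_cast Int.mul_ediv_cancel' (dvd_lcm hk)
    have hM' : (w k : ℚ) * (M / w k : ℤ) = M := by exact_mod_cast Int.mul_ediv_cancel' (hM k hk)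
    have hw : (w k : ℚ) = ∏ j ∈ s.erase k, ((u j : ℚ) - u k) := by push_cast [w]; rfl
    have hw0 : (w k : ℚ) ≠ 0 := by
      rw [hw, prod_ne_zero_iff]
      exact fun j hj => sub_ne_zero.mpr fun h =>
        (mem_erase.mp hj).1 (hu (mem_of_mem_erase hj) hk (by exact_mod_cast h))
    rw [prod_div_distrib, ← hw, ← mul_prod_erase s _ hk, ← hL, ← hM']
    push_cast
    field_simp
  have key : (L * M : ℚ) = ((∑ k ∈ s, L / u k * (M / w k) : ℤ) : ℚ) * ∏ i ∈ s, (u i : ℚ) := by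
    calc (L * M : ℚ)
        = ∑ k ∈ s, (L * M : ℚ) * ∏ j ∈ s.erase k, (u j : ℚ) / (u j - u k) := by
          rw [← mul_sum, sum_prod_div_sub_eq_one (v := fun i => (u i : ℚ))
            (Int.cast_injective.comp_injOn hu) hs, mul_one]
      _ = _ := by rw [sum_congr rfl hterm, ← sum_mul, Int.cast_sum]
  exact_mod_cast key.trans (mul_comm _ _)

theorem factorial_dvd_prod_Ico (l m : ℕ) : m ! ∣ ∏ i ∈ Ico l (l + m), i := by
  rw [prod_Ico_eq_prod_range, add_tsub_cancel_left, ← ascFactorial_eq_prod_range]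
  exact factorial_dvd_ascFactorial l m

theorem factorial_mul_prod_Ico (s m : ℕ) : s ! * ∏ i ∈ Ico (s + 1) (s + 1 + m), i = (s + m)! := by
  rw [prod_Ico_eq_prod_range, add_tsub_cancel_left, ← ascFactorial_eq_prod_range,
    factorial_mul_ascFactorial]

theorem prod_Ico_eq_mul_prod_erase (t n k : ℕ) (hk : k ≤ n) :
    ∏ i ∈ Ico (t + k) (t + k + (n + 1)), i =
      (t + 2 * k) * ∏ j ∈ (range (n + 1)).erase k, (j + k + t) := by
  rw [prod_Ico_eq_prod_range, add_tsub_cancel_left,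
    ← mul_prod_erase _ _ (mem_range.mpr (Nat.lt_succ_of_le hk))]
  congr 1
  · ring
  · exact prod_congr rfl fun j _ => by ring

theorem factorial_mul_prod_Ico_dvd (t n k : ℕ) (hk : k ≤ n) :
    (n - k)! * ∏ i ∈ Ico (t + k) (t + k + (n + 1)), i ∣ ∏ i ∈ Ico (t + k) (t + 2 * n + 1), i := by
  rw [show t + 2 * n + 1 = t + k + (n + 1) + (n - k) by omega,
    ← prod_Ico_consecutive _ (by omega : t + k ≤ t + k + (n + 1))
      (by omega : t + k + (n + 1) ≤ t + k + (n + 1) + (n - k)), mul_comm (n - k)!]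
  exact mul_dvd_mul_left _ (factorial_dvd_prod_Ico _ _)

theorem dvd_prod_Ico {t n k : ℕ} (hk : k ≤ n) :
    k ! * (n - k)! * ∏ j ∈ (range (n + 1)).erase k, (j + k + t) ∣
      ∏ i ∈ Ico t (t + (2 * n + 1)), i := by
  rw [← prod_Ico_consecutive _ (by omega : t ≤ t + k) (by omega), mul_assoc]
  refine mul_dvd_mul (factorial_dvd_prod_Ico t k)
    (dvd_trans ?_ (factorial_mul_prod_Ico_dvd t n k hk))
  rw [prod_Ico_eq_mul_prod_erase t n k hk, mul_left_comm]
  exact dvd_mul_left _ _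

theorem two_mul_dvd_factorial {n k : ℕ} (hn : 1 ≤ n) (hk : k ≤ n) :
    2 * (k ! * (n - k)! * ∏ j ∈ (range (n + 1)).erase k, (j + k)) ∣ (2 * n)! := by
  rcases Nat.eq_zero_or_pos k with rfl | hk0
  · have hP : ∏ j ∈ (range (n + 1)).erase 0, (j + 0) = n ! := by
      rw [range_eq_Ico, Ico_erase_left, ← prod_Ico_id_eq_factorial]; rfl
    rw [hP, ← choose_mul_factorial_mul_factorial (by omega : n ≤ 2 * n),
      show 2 * n - n = n by omega, ← centralBinom_eq_two_mul_choose, factorial_zero,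
      one_mul, Nat.sub_zero, mul_assoc]
    exact mul_dvd_mul_right (two_dvd_centralBinom_of_one_le hn) _
  obtain ⟨k, rfl⟩ : ∃ m, k = m + 1 := ⟨k - 1, by omega⟩
  have h := factorial_mul_prod_Ico_dvd 0 n (k + 1) hk
  rw [prod_Ico_eq_mul_prod_erase 0 n (k + 1) hk] at h
  simp only [zero_add, add_zero] at h
  calc 2 * ((k + 1)! * (n - (k + 1))! * ∏ j ∈ (range (n + 1)).erase (k + 1), (j + (k + 1)))
      = k ! * ((n - (k + 1))! *
          (2 * (k + 1) * ∏ j ∈ (range (n + 1)).erase (k + 1), (j + (k + 1)))) := by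
        rw [factorial_succ]; ring
    _ ∣ k ! * ∏ i ∈ Ico (k + 1) (2 * n + 1), i := mul_dvd_mul_left _ h
    _ = (2 * n)! := by
        rw [← prod_Ico_id_eq_factorial, ← prod_Ico_id_eq_factorial,
          prod_Ico_consecutive _ (by omega : 1 ≤ k + 1) (by omega)]

theorem prod_erase_natCast_sub {n k : ℕ} (hk : k ≤ n) :
    ∏ j ∈ (range (n + 1)).erase k, ((j : ℤ) - k) = (-1) ^ k * (k ! * (n - k)! : ℕ) := by
  have hsplit : (range (n + 1)).erase k = range k ∪ Ico (k + 1) (n + 1) := by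
    ext j; simp only [mem_erase, mem_range, mem_union, mem_Ico]; omega
  have hlow : ∏ j ∈ range k, ((j : ℤ) - k) = (-1) ^ k * k ! := by
    calc ∏ j ∈ range k, ((j : ℤ) - k)
        = ∏ j ∈ range k, ((-1) * ((j + 1 : ℕ) : ℤ)) := by
          rw [← prod_range_reflect]
          exact prod_congr rfl fun j hj => by have := mem_range.mp hj; omega
      _ = (-1) ^ k * k ! := by
          rw [prod_mul_distrib, prod_const, card_range, ← Nat.cast_prod,
            prod_range_add_one_eq_factorial]
  have hhigh : ∏ j ∈ Ico (k + 1) (n + 1), ((j : ℤ) - k) = (n - k)! := by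
    rw [prod_Ico_eq_prod_range, ← prod_range_add_one_eq_factorial, Nat.cast_prod,
      show n + 1 - (k + 1) = n - k by omega]
    exact prod_congr rfl fun j _ => by push_cast; ring
  rw [hsplit, prod_union (disjoint_left.mpr fun j hj hj' => by
    simp only [mem_range, mem_Ico] at hj hj'; omega), hlow, hhigh]
  push_cast
  ring

section QuadraticSequence

variable {a b : ℤ} {t : ℕ} {u : ℕ → ℤ}

theorem sub_eq_mul_sub_mul_add (hu : ∀ k, u k = a * k * (k + t) + b) (j k : ℕ) :
    u j - u k = a * ((j : ℤ) - k) * (j + k + t) := by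
  rw [hu, hu]; ring

theorem prod_erase_sub_eq (hu : ∀ k, u k = a * k * (k + t) + b) {n k : ℕ} (hk : k ≤ n) :
    ∏ j ∈ (range (n + 1)).erase k, (u j - u k) =
      (-1) ^ k * a ^ n * (k ! * (n - k)! * ∏ j ∈ (range (n + 1)).erase k, (j + k + t) : ℕ) := by
  have hcard : #((range (n + 1)).erase k) = n := by
    simp [card_erase_of_mem, Nat.lt_succ_iff.mpr hk]
  simp_rw [sub_eq_mul_sub_mul_add hu, prod_mul_distrib, prod_const, hcard,
    prod_erase_natCast_sub hk]
  push_cast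
  ring

theorem prod_range_dvd_lcm_mul (hab : IsCoprime a b) (ha : a ≠ 0)
    (hu : ∀ k, u k = a * k * (k + t) + b) {n D : ℕ}
    (hD : ∀ k ≤ n, k ! * (n - k)! * ∏ j ∈ (range (n + 1)).erase k, (j + k + t) ∣ D) :
    ∏ i ∈ range (n + 1), u i ∣ (range (n + 1)).lcm u * D := by
  have hinj : Set.InjOn u (range (n + 1)) := fun j _ k _ h => by
    have := sub_eq_mul_sub_mul_add hu j k
    rw [h, sub_self, eq_comm] at this
    rcases mul_eq_zero.mp this with h | h
    · rcases mul_eq_zero.mp h with h | h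
      · exact absurd h ha
      · omega
    · omega
  have hcop : IsCoprime (a ^ n) (∏ i ∈ range (n + 1), u i) :=
    (IsCoprime.prod_right fun i _ => by
      simpa [hu i, mul_assoc] using hab.add_mul_left_right (i * (i + t))).pow_left
  refine hcop.symm.dvd_of_dvd_mul_left ?_
  rw [mul_left_comm]
  refine prod_dvd_lcm_mul hinj fun k hk => ?_
  have hk := Nat.lt_succ_iff.mp (mem_range.mp hk)
  rw [prod_erase_sub_eq hu hk, mul_assoc, (isUnit_neg_one.pow k).mul_left_dvd]
  exact mul_dvd_mul_left _ (Int.natCast_dvd_natCast.mpr (hD k hk))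

end QuadraticSequence

theorem exists_cast_eq_mul_div_of_dvd {L P : ℤ} {q D F : ℕ} (h : P ∣ L * D) (hF : q * D = F)
    (hF0 : F ≠ 0) : ∃ c : ℤ, (L : ℚ) = c * q * P / F := by
  obtain ⟨c, hc⟩ := h
  refine ⟨c, ?_⟩
  rw [eq_div_iff (by exact_mod_cast hF0), ← hF]
  push_cast
  have hcq : (L : ℚ) * D = P * c := by exact_mod_cast hc
  linear_combination (q : ℚ) * hcq

theorem stmt_16_general (a t b : ℤ) (ha : 1 ≤ a) (hab : IsCoprime a b)
    (u : ℕ → ℤ) (hu : ∀ k, u k = a * k * (k + t) + b)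
    (n : ℕ) (hn : 1 ≤ n) :
    (t = 0 →
      ∃ c : ℤ, (((Finset.range (n + 1)).lcm u : ℤ) : ℚ) =
        c * (2 * ∏ i ∈ Finset.range (n + 1), (u i : ℚ)) / (Nat.factorial (2 * n) : ℚ)) ∧
    (1 ≤ t →
      ∃ c : ℤ, (((Finset.range (n + 1)).lcm u : ℤ) : ℚ) =
        c * (Nat.factorial (t - 1).toNat : ℚ) * (∏ i ∈ Finset.range (n + 1), (u i : ℚ)) /
          (Nat.factorial (2 * n + t.toNat) : ℚ)) := by
  refine ⟨fun ht => ?_, fun ht => ?_⟩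
  · subst ht
    have h2 : 2 * ((2 * n)! / 2) = (2 * n)! :=
      Nat.mul_div_cancel' (Nat.dvd_factorial two_pos (by omega))
    have hdvd := prod_range_dvd_lcm_mul (t := 0) hab (by omega) (fun k => by simpa using hu k)
      (D := (2 * n)! / 2) fun k hk => by
        rw [← Nat.mul_dvd_mul_iff_left two_pos, h2]
        simpa using two_mul_dvd_factorial hn hk
    simpa [mul_assoc] using exists_cast_eq_mul_div_of_dvd hdvd h2 (factorial_ne_zero _)
  · lift t to ℕ using by omega
    obtain ⟨s, rfl⟩ : ∃ s, t = s + 1 := ⟨t - 1, by omega⟩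
    have hdvd := prod_range_dvd_lcm_mul (n := n) hab (by omega) hu fun k hk => dvd_prod_Ico hk
    obtain ⟨c, hc⟩ := exists_cast_eq_mul_div_of_dvd hdvd (factorial_mul_prod_Ico s (2 * n + 1))
      (factorial_ne_zero _)
    exact ⟨c, by simpa [show 2 * n + (s + 1) = s + (2 * n + 1) by ring] using hc⟩

theorem stmt_16 (a t b : ℤ) (ha : 1 ≤ a) (ht : 0 ≤ t) (hab : IsCoprime a b)
    (u : ℕ → ℤ) (hu : ∀ k, u k = a * k * (k + t) + b)
    (n : ℕ) (hn : 1 ≤ n) (hne : ∀ k ≤ n, u k ≠ 0) :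
    (t = 0 →
      ∃ c : ℤ, (((Finset.range (n + 1)).lcm u : ℤ) : ℚ) =
        c * (2 * ∏ i ∈ Finset.range (n + 1), (u i : ℚ)) / (Nat.factorial (2 * n) : ℚ)) ∧
    (1 ≤ t →
      ∃ c : ℤ, (((Finset.range (n + 1)).lcm u : ℤ) : ℚ) =
        c * (Nat.factorial (t - 1).toNat : ℚ) * (∏ i ∈ Finset.range (n + 1), (u i : ℚ)) /
          (Nat.factorial (2 * n + t.toNat) : ℚ)) :=
  stmt_16_general a t b ha hab u hu n hn
end

section
/- For every nonnegative integer k and positive integer n, the integer n·C(n+k, k) divides lcm{n, n+1, ..., n+k}; moreover if n·(n+k) ≡ 0 (mod k!), then lcm{n, n+1, ..., n+k} = n·C(n+k, k). -/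
/-!
Write `f n k = n * C(n + k, k) = n (n + 1) ⋯ (n + k) / k!`. The divisibility follows by induction
on `k` from `1 / f n (k + 1) = 1 / f n k - 1 / f (n + 1) k`: `f n k` and `f (n + 1) k` both divide
the lcm `L` of `n, …, n + k + 1`, so `L / f n (k + 1) = L / f n k - L / f (n + 1) k` is an integer.

For the converse divisibility each `n + j` has to divide `f n k`. This is clear for `j = 0` and
`j = k`; otherwise `n`, `n + j` and `n + k` are three distinct factors of `k! * f n k`, and
`k! ∣ n * (n + k)`.
-/

open Finset Nat

theorem dvd_of_mul_eq_mul_sub {R : Type*} [CommRing R] [IsDomain R] {a b c L : R}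
    (habc : a * b = c * (b - a)) (ha : a ∣ L) (hb : b ∣ L) : c ∣ L := by
  obtain ⟨x, rfl⟩ := ha
  obtain ⟨y, hy⟩ := hb
  by_cases hab : a * b = 0
  · rcases mul_eq_zero.1 hab with rfl | rfl
    · simp
    · simp [hy]
  refine ⟨x - y, mul_left_cancel₀ hab ?_⟩
  linear_combination (a * x) * habc - a * c * hy

theorem mul_choose_mul_eq_mul_choose_mul_sub (n k : ℕ) :
    ((n * (n + k).choose k : ℕ) : ℤ) * ((n + 1) * (n + 1 + k).choose k : ℕ) =
      ((n * (n + (k + 1)).choose (k + 1) : ℕ) : ℤ) *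
        (((n + 1) * (n + 1 + k).choose k : ℕ) - (n * (n + k).choose k : ℕ)) := by
  have h₁ := choose_mul_succ_eq (n + k) k
  have h₂ := add_one_mul_choose_eq (n + k) k
  rw [show n + k + 1 - k = n + 1 by omega, show n + k + 1 = n + 1 + k by omega] at h₁
  rw [show n + k + 1 = n + (k + 1) by omega] at h₂
  zify at h₁ h₂
  push_cast
  linear_combination (n * (n + (k + 1)).choose (k + 1) - n * (n + k).choose k : ℤ) * h₁ +
    (n * (n + k).choose k : ℤ) * h₂

theorem mul_choose_dvd_lcm_Icc (n k : ℕ) : n * (n + k).choose k ∣ (Icc n (n + k)).lcm id := by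
  induction k generalizing n with
  | zero => simp
  | succ k ih =>
    have hleft : n * (n + k).choose k ∣ (Icc n (n + (k + 1))).lcm id :=
      (ih n).trans (lcm_mono (Icc_subset_Icc le_rfl (by omega)))
    have hright : (n + 1) * (n + 1 + k).choose k ∣ (Icc n (n + (k + 1))).lcm id :=
      (ih (n + 1)).trans (lcm_mono (Icc_subset_Icc (by omega) (by omega)))
    exact Int.natCast_dvd_natCast.1 <| dvd_of_mul_eq_mul_sub
      (mul_choose_mul_eq_mul_choose_mul_sub n k)
      (Int.natCast_dvd_natCast.2 hleft) (Int.natCast_dvd_natCast.2 hright)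

theorem add_dvd_mul_choose_self (n k : ℕ) : n + k ∣ n * (n + k).choose k := by
  cases n with
  | zero => simp
  | succ n =>
    refine ⟨(n + k).choose n, ?_⟩
    have := add_one_mul_choose_eq (n + k) n
    rw [show n + k + 1 = n + 1 + k by omega] at this
    rw [← choose_symm_add]
    linarith

theorem add_dvd_mul_choose_of_factorial_dvd {n k j : ℕ} (hk : k ! ∣ n * (n + k)) (hj : j ≤ k) :
    n + j ∣ n * (n + k).choose k := by
  rcases eq_or_ne j 0 with rfl | hj₀
  · exact dvd_mul_right n _
  rcases eq_or_ne j k with rfl | hjk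
  · exact add_dvd_mul_choose_self n j
  have hfactors : n * ((n + j) * (n + k)) ∣ k ! * (n * (n + k).choose k) := by
    have hsub : ({0, j, k} : Finset ℕ) ⊆ range (k + 1) := by
      intro i
      simp only [mem_insert, mem_singleton, mem_range]
      omega
    have h := prod_dvd_prod_of_subset _ _ (fun i => n + i) hsub
    rwa [prod_insert (by simp only [mem_insert, mem_singleton]; omega),
      prod_insert (by simp only [mem_singleton]; omega), prod_singleton,
      ← ascFactorial_eq_prod_range, ascFactorial_succ, ← succ_ascFactorial,
      ascFactorial_eq_factorial_mul_choose, add_zero, mul_left_comm n (k !)] at h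
  refine Nat.dvd_of_mul_dvd_mul_left (factorial_pos k) (dvd_trans ?_ hfactors)
  rw [mul_comm (k !), mul_left_comm n]
  exact mul_dvd_mul_left _ hk

theorem stmt_18_general (k n : ℕ) :
    n * (n + k).choose k ∣ (Finset.Icc n (n + k)).lcm id ∧
    (Nat.factorial k ∣ n * (n + k) →
      (Finset.Icc n (n + k)).lcm id = n * (n + k).choose k) := by
  refine ⟨mul_choose_dvd_lcm_Icc n k, fun hk => dvd_antisymm ?_ (mul_choose_dvd_lcm_Icc n k)⟩
  refine Finset.lcm_dvd fun m hm => ?_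
  obtain ⟨j, hj, rfl⟩ : ∃ j ≤ k, n + j = m := ⟨m - n, by grind⟩
  exact add_dvd_mul_choose_of_factorial_dvd hk hj

theorem stmt_18 (k n : ℕ) (hn : 1 ≤ n) :
    n * (n + k).choose k ∣ (Finset.Icc n (n + k)).lcm id ∧
    (Nat.factorial k ∣ n * (n + k) →
      (Finset.Icc n (n + k)).lcm id = n * (n + k).choose k) :=
  stmt_18_general k n
end

section
/- For every nonnegative integer k and positive integer n, lcm{n, n+1, ..., n+k} divides n·C(n+k,k)·lcm{C(k,0), C(k,1), ..., C(k,k)}; moreover if n + k + 1 ≡ 0 (mod k!), then lcm{n, n+1, ..., n+k} = n·C(n+k,k)·lcm{C(k,0), ..., C(k,k)}. -/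
/-!
Let `W = {n, …, n + k}` and `L = lcm_j C(k, j)`, and recall `∏ W = n · C(n + k, k) · k!`.
Each `n + i` divides `n · C(n + k, k) · C(k, i) = (n + i) · C(n + k, k - i) · C(n + i - 1, i)`,
which gives the divisibility.

For the equality, Kummer's carry count gives `v_p(C(m, j)) + v_p(j) ≤ log_p m`, hence
`(k + 1) · L ∣ lcm(1, …, k + 1)`, and it suffices to show
`∏ W · lcm(1, …, k + 1) ∣ (k + 1)! · lcm W`. Compare `p`-adic valuations, counting multiples of
`q = p ^ t` for each `t ≥ 1`: if `q ≤ k + 1`, then `q ∣ k + 1` or `q ∣ k! ∣ n + k + 1`, and in both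
cases `W` contains exactly `⌊(k + 1) / q⌋` multiples of `q`, as many as `{1, …, k + 1}`; if
`q > k + 1`, then `W` contains at most one multiple of `q`, and none once `t > v_p(lcm W)`.
-/

open Finset Nat

theorem add_dvd_mul_choose_add (n i : ℕ) : n + i ∣ n * (n + i).choose i := by
  rcases n with _ | m
  · simp
  · refine ⟨(m + i).choose i, ?_⟩
    rw [show m + 1 + i = m + i + 1 by omega, mul_comm (m + i + 1), choose_mul_succ_eq,
      show m + i + 1 - i = m + 1 by omega, mul_comm]

theorem add_dvd_mul_choose_mul_choose (n : ℕ) {k i : ℕ} (hi : i ≤ k) :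
    n + i ∣ n * (n + k).choose k * k.choose i := by
  have hmul : (n + k).choose k * k.choose i = (n + k).choose (k - i) * (n + i).choose i := by
    rw [← choose_symm hi, choose_mul (by omega)]
    congr 2 <;> omega
  rw [mul_assoc, hmul, mul_left_comm]
  exact Dvd.dvd.mul_left (add_dvd_mul_choose_add n i) _

theorem lcm_Icc_dvd_mul_choose_mul_lcm_choose (n k : ℕ) :
    (Icc n (n + k)).lcm id ∣
      n * (n + k).choose k * (range (k + 1)).lcm (fun j => k.choose j) := by
  refine Finset.lcm_dvd fun x hx => ?_
  obtain ⟨i, hik, rfl⟩ : ∃ i ≤ k, x = n + i := ⟨x - n, by simp at hx; omega⟩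
  exact (add_dvd_mul_choose_mul_choose n hik).trans
    (mul_dvd_mul_left _ (dvd_lcm (mem_range.2 (by omega))))

theorem prod_Icc_eq_mul_choose_mul_factorial (n k : ℕ) :
    ∏ x ∈ Icc n (n + k), x = n * (n + k).choose k * k ! := by
  induction k with
  | zero => simp
  | succ k ih =>
    rw [← add_assoc, prod_Icc_succ_top (by omega), ih, factorial_succ]
    have := add_one_mul_choose_eq (n + k) k
    calc n * (n + k).choose k * k ! * (n + k + 1)
        = n * ((n + k + 1) * (n + k).choose k) * k ! := by ring
      _ = n * (n + k + 1).choose (k + 1) * ((k + 1) * k !) := by rw [this]; ring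

namespace Nat

theorem factorization_choose_add_factorization_le_log {p m j : ℕ} (hp : p.Prime) (hj0 : j ≠ 0)
    (hjm : j ≤ m) : (m.choose j).factorization p + j.factorization p ≤ log p m := by
  have hdisj : Disjoint {i ∈ Ico 1 (log p m + 1) | p ^ i ≤ j % p ^ i + (m - j) % p ^ i}
      {i ∈ Ico 1 (log p m + 1) | p ^ i ∣ j} := by
    -- a carry into position `i` needs `j % p ^ i ≠ 0`
    simp +contextual [Finset.disjoint_right, dvd_iff_mod_eq_zero, Nat.mod_lt _ (pow_pos hp.pos _)]
  rw [factorization_choose hp hjm (lt_add_one _),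
    factorization_eq_card_pow_dvd_of_lt hp (pos_of_ne_zero hj0)
      (hjm.trans_lt (lt_pow_succ_log_self hp.one_lt m)),
    ← card_union_of_disjoint hdisj, ← filter_or]
  exact (card_filter_le _ _).trans_eq (by simp)

theorem mul_choose_dvd_lcmUpto {m j : ℕ} (hj0 : j ≠ 0) (hjm : j ≤ m) :
    j * m.choose j ∣ lcmUpto m := by
  have hchoose : m.choose j ≠ 0 := (choose_pos hjm).ne'
  rw [← factorization_prime_le_iff_dvd (mul_ne_zero hj0 hchoose) (lcmUpto_ne_zero m)]
  intro p hp
  rw [factorization_mul hj0 hchoose, factorization_lcmUpto m hp, Finsupp.add_apply, add_comm]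
  exact factorization_choose_add_factorization_le_log hp hj0 hjm

end Nat

theorem succ_mul_lcm_choose_dvd_lcmUpto (k : ℕ) :
    (k + 1) * (range (k + 1)).lcm (fun j => k.choose j) ∣ lcmUpto (k + 1) := by
  have hdvd : k + 1 ∣ lcmUpto (k + 1) := dvd_lcm (by simp)
  refine Nat.mul_dvd_of_dvd_div hdvd (Finset.lcm_dvd fun j hj => Nat.dvd_div_of_mul_dvd ?_)
  rw [add_one_mul_choose_eq, mul_comm]
  exact mul_choose_dvd_lcmUpto j.succ_ne_zero (by simp at hj; omega)

theorem card_filter_dvd_Ioc (a m q : ℕ) :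
    #{x ∈ Ioc a (a + m) | q ∣ x} = (a + m) / q - a / q := by
  have hunion : Ioc 0 a ∪ Ioc a (a + m) = Ioc 0 (a + m) :=
    Ioc_union_Ioc_eq_Ioc (zero_le a) (le_add_right a m)
  have hdisj : Disjoint (Ioc 0 a) (Ioc a (a + m)) := Ioc_disjoint_Ioc_of_le le_rfl
  have hcard := Ioc_filter_dvd_card_eq_div (a + m) q
  rw [← hunion, filter_union, card_union_of_disjoint (disjoint_filter_filter hdisj),
    Ioc_filter_dvd_card_eq_div] at hcard
  omega

theorem add_mod_add_mod_lt_of_dvd_add_add_one {a b q : ℕ} (h : q ∣ a + b + 1) :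
    a % q + b % q < q := by
  rcases q.eq_zero_or_pos with rfl | hq
  · simp at h
  by_contra! hle
  have hrest : q ∣ a % q + b % q + 1 - q := by
    have hsplit : a + b + 1 = q * (a / q + b / q + 1) + (a % q + b % q + 1 - q) := by
      have := div_add_mod a q
      have := div_add_mod b q
      rw [mul_add, mul_add, mul_one]
      omega
    rw [hsplit] at h
    exact (Nat.dvd_add_right (dvd_mul_right _ _)).1 h
  have := le_of_dvd (by omega) hrest
  have := mod_lt a hq
  have := mod_lt b hq
  omega

theorem card_filter_dvd_Ioc_of_dvd {a m q : ℕ} (h : q ∣ m ∨ q ∣ a + m + 1) :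
    #{x ∈ Ioc a (a + m) | q ∣ x} = m / q := by
  rcases q.eq_zero_or_pos with rfl | hq
  · simp only [zero_dvd_iff, filter_eq', mem_Ioc, Nat.div_zero]
    split_ifs <;> simp_all
  have hcarry : a % q + m % q < q := by
    rcases h with h | h
    · rw [mod_eq_zero_of_dvd h]
      exact (mod_lt a hq).trans_eq (add_zero q).symm
    · exact add_mod_add_mod_lt_of_dvd_add_add_one h
  rw [card_filter_dvd_Ioc, add_div_eq_of_add_mod_lt hcarry, Nat.add_sub_cancel_left]

theorem card_filter_dvd_Ioc_le_one {a m q : ℕ} (h : m < q) :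
    #{x ∈ Ioc a (a + m) | q ∣ x} ≤ 1 := by
  have : (a + m) / q ≤ a / q + 1 :=
    (Nat.div_le_div_right (by omega : a + m ≤ a + q)).trans_eq (add_div_right a (by omega))
  rw [card_filter_dvd_Ioc]
  omega

theorem factorization_prod_id_eq_sum_card_filter_pow_dvd {p b : ℕ} (hp : p.Prime)
    {s : Finset ℕ} (hs : ∀ x ∈ s, 0 < x ∧ x < p ^ b) :
    (∏ x ∈ s, x).factorization p = ∑ t ∈ Ico 1 b, #{x ∈ s | p ^ t ∣ x} := by
  rw [factorization_prod_apply fun x hx => (hs x hx).1.ne',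
    sum_congr rfl fun x hx => factorization_eq_card_pow_dvd_of_lt hp (hs x hx).1 (hs x hx).2]
  simp only [card_filter]
  exact sum_comm

theorem card_filter_Ico_one_le {m b : ℕ} (h : m < b) : #{t ∈ Ico 1 b | t ≤ m} = m := by
  rw [show {t ∈ Ico 1 b | t ≤ m} = Icc 1 m by ext; simp; omega, card_Icc, add_tsub_cancel_right]

/- Summed over `t`, the left side gives `v_p(∏ W) + v_p(lcm(1, …, k + 1))` and the right side
`v_p((k + 1)!) + M`, where `W = Ioc a (a + (k + 1))`. -/
theorem card_filter_pow_dvd_Ioc_add_le {p a k M t : ℕ} (hp : p.Prime)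
    (h : k ! ∣ a + (k + 1) + 1)
    (hM : #{x ∈ Ioc a (a + (k + 1)) | p ^ t ∣ x} ≠ 0 → t ≤ M) :
    #{x ∈ Ioc a (a + (k + 1)) | p ^ t ∣ x} + (if t ≤ log p (k + 1) then 1 else 0)
      ≤ (k + 1) / p ^ t + (if t ≤ M then 1 else 0) := by
  have hpt : 0 < p ^ t := pow_pos hp.pos t
  by_cases hA : t ≤ log p (k + 1)
  · have hle : p ^ t ≤ k + 1 := pow_le_of_le_log k.succ_ne_zero hA
    have hdvd : p ^ t ∣ k + 1 ∨ p ^ t ∣ a + (k + 1) + 1 := by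
      rcases hle.eq_or_lt with heq | hlt
      · exact .inl heq.dvd
      · exact .inr ((dvd_factorial hpt (by omega)).trans h)
    have hcard := card_filter_dvd_Ioc_of_dvd hdvd
    have hpos : 0 < (k + 1) / p ^ t := Nat.div_pos hle hpt
    rw [if_pos hA, if_pos (hM (by omega))]
    omega
  · have hlt : k + 1 < p ^ t := lt_pow_of_log_lt hp.one_lt (by omega)
    have hcard := card_filter_dvd_Ioc_le_one (a := a) hlt
    rw [if_neg hA, Nat.div_eq_of_lt hlt]
    split_ifs <;> omega

theorem prod_Icc_mul_lcmUpto_dvd_factorial_mul_lcm_Icc {n k : ℕ} (hn : 0 < n)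
    (h : k ! ∣ n + k + 1) :
    (∏ x ∈ Icc n (n + k), x) * lcmUpto (k + 1) ∣ (k + 1)! * (Icc n (n + k)).lcm id := by
  obtain ⟨a, rfl⟩ : ∃ a, n = a + 1 := ⟨n - 1, by omega⟩
  rw [show Icc (a + 1) (a + 1 + k) = Ioc a (a + (k + 1)) by ext; simp; omega]
  rw [show a + 1 + k + 1 = a + (k + 1) + 1 by omega] at h
  set W := Ioc a (a + (k + 1))
  set b := a + (k + 1) + 1
  have hW : ∀ x ∈ W, 0 < x ∧ x < b := fun x hx => by simp [W, b] at hx ⊢; omega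
  have hW0 : ∀ x ∈ W, id x ≠ 0 := fun x hx => (hW x hx).1.ne'
  have hprod0 : ∏ x ∈ W, x ≠ 0 := prod_ne_zero_iff.2 hW0
  have hlcm0 : W.lcm id ≠ 0 := by simpa [lcm_eq_zero_iff] using hW0
  rw [← factorization_prime_le_iff_dvd (mul_ne_zero hprod0 (lcmUpto_ne_zero _))
    (mul_ne_zero (factorial_ne_zero _) hlcm0)]
  intro p hp
  set M := (W.lcm id).factorization p
  have hM : ∀ x ∈ W, x.factorization p ≤ M := fun x hx => by
    simpa [M, factorization_lcm hW0] using le_sup (f := fun x => x.factorization p) hx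
  have hMb : M < b := by
    rw [show M = W.sup fun x => x.factorization p from factorization_lcm hW0 p,
      Finset.sup_lt_iff (by simp [b])]
    exact fun x hx => (factorization_lt p (hW x hx).1.ne').trans (hW x hx).2
  have hAb : log p (k + 1) < b := (log_lt_self p k.succ_ne_zero).trans (by omega)
  have hWb : ∀ x ∈ W, 0 < x ∧ x < p ^ b :=
    fun x hx => ⟨(hW x hx).1, (hW x hx).2.trans (Nat.lt_pow_self hp.one_lt)⟩
  have hmult : ∀ t, #{x ∈ W | p ^ t ∣ x} ≠ 0 → t ≤ M := fun t hne => by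
    obtain ⟨x, hx⟩ := card_ne_zero.1 hne
    rw [mem_filter] at hx
    exact ((hp.pow_dvd_iff_le_factorization (hW x hx.1).1.ne').1 hx.2).trans (hM x hx.1)
  simp only [Finsupp.add_apply, Nat.factorization_mul hprod0 (lcmUpto_ne_zero _),
    Nat.factorization_mul (factorial_ne_zero _) hlcm0]
  calc (∏ x ∈ W, x).factorization p + (lcmUpto (k + 1)).factorization p
      = ∑ t ∈ Ico 1 b, (#{x ∈ W | p ^ t ∣ x} + if t ≤ log p (k + 1) then 1 else 0) := by
        rw [factorization_prod_id_eq_sum_card_filter_pow_dvd hp hWb, factorization_lcmUpto _ hp,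
          sum_add_distrib, sum_boole, card_filter_Ico_one_le hAb, Nat.cast_id]
    _ ≤ ∑ t ∈ Ico 1 b, ((k + 1) / p ^ t + if t ≤ M then 1 else 0) :=
        sum_le_sum fun t _ => card_filter_pow_dvd_Ioc_add_le hp h (hmult t)
    _ = ((k + 1)!).factorization p + M := by
        rw [sum_add_distrib, sum_boole, card_filter_Ico_one_le hMb, Nat.cast_id,
          factorization_factorial hp hAb]

theorem stmt_19_general (k n : ℕ) :
    (Finset.Icc n (n + k)).lcm id ∣
      n * (n + k).choose k * (Finset.range (k + 1)).lcm (fun j => k.choose j) ∧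
    (Nat.factorial k ∣ n + k + 1 →
      (Finset.Icc n (n + k)).lcm id =
        n * (n + k).choose k * (Finset.range (k + 1)).lcm (fun j => k.choose j)) := by
  refine ⟨lcm_Icc_dvd_mul_choose_mul_lcm_choose n k, fun h => ?_⟩
  rcases n.eq_zero_or_pos with rfl | hn
  · simp
  refine (lcm_Icc_dvd_mul_choose_mul_lcm_choose n k).antisymm ?_
  refine Nat.dvd_of_mul_dvd_mul_left (factorial_pos (k + 1)) ?_
  calc (k + 1)! * (n * (n + k).choose k * (range (k + 1)).lcm fun j => k.choose j)
      = (∏ x ∈ Icc n (n + k), x) * ((k + 1) * (range (k + 1)).lcm fun j => k.choose j) := by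
        rw [prod_Icc_eq_mul_choose_mul_factorial, factorial_succ]
        ring
    _ ∣ (∏ x ∈ Icc n (n + k), x) * lcmUpto (k + 1) :=
        mul_dvd_mul_left _ (succ_mul_lcm_choose_dvd_lcmUpto k)
    _ ∣ (k + 1)! * (Icc n (n + k)).lcm id := prod_Icc_mul_lcmUpto_dvd_factorial_mul_lcm_Icc hn h

theorem stmt_19 (k n : ℕ) (hn : 1 ≤ n) :
    (Finset.Icc n (n + k)).lcm id ∣
      n * (n + k).choose k * (Finset.range (k + 1)).lcm (fun j => k.choose j) ∧
    (Nat.factorial k ∣ n + k + 1 →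
      (Finset.Icc n (n + k)).lcm id =
        n * (n + k).choose k * (Finset.range (k + 1)).lcm (fun j => k.choose j)) :=
  stmt_19_general k n
end
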